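/- arXiv:2008.02224 — 8 statements merged into one kernel-verified Lean document; each statement's English description precedes it below -/
import Mathlib

section
/- Let Ω ⊆ ℝ^d (d = 2 or 3) be a bounded open set. There exists a constant C > 0 (depending only on Ω and d) such that for all continuously differentiable vector fields u, v, w : ℝ^d → ℝ^d with compact support contained in Ω, |(u·∇v, w)| ≤ C · ‖Du‖_{L²} · ‖Dv‖_{L²} · ‖Dw‖_{L²}, where ‖Du‖_{L²} := (∫_Ω ‖Du(x)‖_op² dx)^{1/2} and similarly for v, w. -/
/-!
The Gagliardo–Nirenberg–Sobolev inequality on a bounded set, `‖f‖_{L⁴} ≲ ‖Df‖_{L^{12/7}}`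
(valid since `4 ≤ (12/7)* = 12/7 · d/(d - 12/7)` for `d = 2, 3`), combined with Hölder's
inequality `‖Df‖_{L^{12/7}(Ω)} ≲ ‖Df‖_{L²(Ω)}` on the finite-measure set `Ω`, plays the role of
the Ladyzhenskaya and Poincaré–Friedrichs inequalities. The generalized Hölder inequality with
exponents `1 = 1/2 + 1/4 + 1/4` then bounds `∫ ⟪Dv u, w⟫` by `‖Dv‖_{L²} ‖u‖_{L⁴} ‖w‖_{L⁴}`.
-/

open scoped RealInnerProductSpace ENNReal NNReal
open MeasureTheory Module

namespace MeasureTheory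

section Holder

variable {α : Type*} [MeasurableSpace α] {μ : Measure α}

theorem MemLp.toReal_eLpNorm_two {E : Type*} [NormedAddCommGroup E] {f : α → E}
    (hf : MemLp f 2 μ) : (eLpNorm f 2 μ).toReal = √(∫ x, ‖f x‖ ^ 2 ∂μ) := by
  rw [hf.eLpNorm_eq_integral_rpow_norm two_ne_zero ENNReal.ofNat_ne_top,
    ENNReal.toReal_ofReal (by positivity), Real.sqrt_eq_rpow]
  norm_num

variable {E F : Type*} [NormedAddCommGroup E] [NormedSpace ℝ E]
  [NormedAddCommGroup F] [InnerProductSpace ℝ F]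

theorem eLpNorm_inner_apply_le {A : α → E →L[ℝ] F} {u : α → E} {w : α → F}
    (hA : AEStronglyMeasurable A μ) (hu : AEStronglyMeasurable u μ)
    (hw : AEStronglyMeasurable w μ) :
    eLpNorm (fun x ↦ ⟪A x (u x), w x⟫) 1 μ ≤ eLpNorm A 2 μ * eLpNorm u 4 μ * eLpNorm w 4 μ := by
  have hquarter : (4 : ℝ≥0∞)⁻¹ + 4⁻¹ = 2⁻¹ := by
    rw [show (4 : ℝ≥0∞) = 2 * 2 by norm_num, ENNReal.mul_inv (by simp) (by simp), ← add_mul,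
      ENNReal.inv_two_add_inv_two, one_mul]
  have := ENNReal.HolderTriple.of 2 4
  have : ENNReal.HolderTriple (2⁻¹ + 4⁻¹)⁻¹ 4 1 :=
    ⟨by rw [inv_inv, add_assoc, hquarter, ENNReal.inv_two_add_inv_two, inv_one]⟩
  calc eLpNorm (fun x ↦ ⟪A x (u x), w x⟫) 1 μ
      ≤ 1 * eLpNorm (fun x ↦ A x (u x)) (2⁻¹ + 4⁻¹)⁻¹ μ * eLpNorm w 4 μ :=
        eLpNorm_le_eLpNorm_mul_eLpNorm'_of_norm
          (isBoundedBilinearMap_apply.continuous.comp_aestronglyMeasurable₂ hA hu) hw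
          (fun a b ↦ ⟪a, b⟫) 1
          (.of_forall fun x ↦ by simpa using norm_inner_le_norm (𝕜 := ℝ) (A x (u x)) (w x))
    _ ≤ 1 * (1 * eLpNorm A 2 μ * eLpNorm u 4 μ) * eLpNorm w 4 μ := by
        gcongr
        exact eLpNorm_le_eLpNorm_mul_eLpNorm'_of_norm hA hu (fun B y ↦ B y) 1
          (.of_forall fun x ↦ by simpa using (A x).le_opNorm (u x))
    _ = eLpNorm A 2 μ * eLpNorm u 4 μ * eLpNorm w 4 μ := by rw [one_mul, one_mul]

end Holder

section Sobolev

variable {E F : Type*} [NormedAddCommGroup E] [NormedSpace ℝ E] [MeasurableSpace E]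
  [BorelSpace E] [FiniteDimensional ℝ E] (μ : Measure E) [μ.IsAddHaarMeasure]
  [NormedAddCommGroup F] [NormedSpace ℝ F] [FiniteDimensional ℝ F]

theorem exists_eLpNorm_four_le_eLpNorm_fderiv_two (h2 : 2 ≤ finrank ℝ E)
    (h3 : finrank ℝ E ≤ 3) {s : Set E} (hs : Bornology.IsBounded s) :
    ∃ K : ℝ≥0, ∀ f : E → F, ContDiff ℝ 1 f → tsupport f ⊆ s →
      eLpNorm f 4 (μ.restrict s) ≤ K * eLpNorm (fderiv ℝ f) 2 (μ.restrict s) := by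
  set p : ℝ≥0 := 12 / 7
  have hp1 : 1 ≤ p := by rw [← NNReal.coe_le_coe]; norm_num [p]
  have hp2 : (p : ℝ≥0∞) ≤ 2 := by
    exact_mod_cast (show p ≤ 2 by rw [← NNReal.coe_le_coe]; norm_num [p])
  have hpn : p < finrank ℝ E := by
    rw [← NNReal.coe_lt_coe]; push_cast [p]
    exact lt_of_lt_of_le (by norm_num) (Nat.cast_le.mpr h2)
  have hp4 : (p : ℝ)⁻¹ - (finrank ℝ E : ℝ)⁻¹ ≤ ((4 : ℝ≥0) : ℝ)⁻¹ := by
    have : (3 : ℝ)⁻¹ ≤ (finrank ℝ E : ℝ)⁻¹ :=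
      inv_anti₀ (by norm_cast; omega) (by exact_mod_cast h3)
    norm_num [p]
    linarith
  have hexp : (0 : ℝ) ≤ (p : ℝ)⁻¹ - 2⁻¹ := by norm_num [p]
  refine ⟨eLpNormLESNormFDerivOfLeConst F μ s p 4 * (μ s).toNNReal ^ ((p : ℝ)⁻¹ - 2⁻¹), ?_⟩
  intro f hf hfs
  have hsupp : f.support ⊆ s := (subset_tsupport f).trans hfs
  have hDsupp : (fderiv ℝ f).support ⊆ s := (support_fderiv_subset ℝ).trans hfs
  calc eLpNorm f 4 (μ.restrict s) = eLpNorm f (4 : ℝ≥0) μ := by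
        rw [eLpNorm_restrict_eq_of_support_subset hsupp]; rfl
    _ ≤ eLpNormLESNormFDerivOfLeConst F μ s p 4 * eLpNorm (fderiv ℝ f) p μ :=
        eLpNorm_le_eLpNorm_fderiv_of_le μ hf hsupp hp1 hpn hp4 hs
    _ = eLpNormLESNormFDerivOfLeConst F μ s p 4 * eLpNorm (fderiv ℝ f) p (μ.restrict s) := by
        rw [eLpNorm_restrict_eq_of_support_subset (ε := E →L[ℝ] F) hDsupp]
    _ ≤ eLpNormLESNormFDerivOfLeConst F μ s p 4 *
          (eLpNorm (fderiv ℝ f) 2 (μ.restrict s) * μ s ^ ((p : ℝ)⁻¹ - 2⁻¹)) := by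
        gcongr
        simpa [Measure.restrict_apply_univ] using
          eLpNorm_le_eLpNorm_mul_rpow_measure_univ (μ := μ.restrict s) hp2
            (hf.continuous_fderiv one_ne_zero).aestronglyMeasurable
    _ = _ := by
        rw [ENNReal.coe_mul, ENNReal.coe_rpow_of_nonneg _ hexp,
          ENNReal.coe_toNNReal hs.measure_lt_top.ne]
        ring

end Sobolev

end MeasureTheory

theorem convective_form_le_grad_L2_general
    (d : ℕ) (hd : d = 2 ∨ d = 3)
    (Ω : Set (EuclideanSpace ℝ (Fin d)))
    (hΩbdd : Bornology.IsBounded Ω) :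
    ∃ C : ℝ, 0 < C ∧
      ∀ u v w : EuclideanSpace ℝ (Fin d) → EuclideanSpace ℝ (Fin d),
        ContDiff ℝ 1 u → ContDiff ℝ 1 v → ContDiff ℝ 1 w →
        HasCompactSupport u → HasCompactSupport v → HasCompactSupport w →
        tsupport u ⊆ Ω → tsupport v ⊆ Ω → tsupport w ⊆ Ω →
        |∫ x in Ω, ⟪(fderiv ℝ v x) (u x), w x⟫|
          ≤ C * Real.sqrt (∫ x in Ω, ‖fderiv ℝ u x‖ ^ 2)
              * Real.sqrt (∫ x in Ω, ‖fderiv ℝ v x‖ ^ 2)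
              * Real.sqrt (∫ x in Ω, ‖fderiv ℝ w x‖ ^ 2) := by
  have hdim : finrank ℝ (EuclideanSpace ℝ (Fin d)) = d := finrank_euclideanSpace_fin
  obtain ⟨K, hK⟩ := exists_eLpNorm_four_le_eLpNorm_fderiv_two volume
    (F := EuclideanSpace ℝ (Fin d)) (by omega) (by omega) hΩbdd
  refine ⟨K ^ 2 + 1, by positivity, fun u v w hu hv hw hcu hcv hcw hsu hsv hsw ↦ ?_⟩
  set μ := volume.restrict Ω
  have hL2 : ∀ f : EuclideanSpace ℝ (Fin d) → EuclideanSpace ℝ (Fin d), ContDiff ℝ 1 f →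
      HasCompactSupport f → MemLp (fderiv ℝ f) 2 μ := fun f hf hcf ↦
    ((hf.continuous_fderiv one_ne_zero).memLp_of_hasCompactSupport (hcf.fderiv (𝕜 := ℝ))).restrict Ω
  have hbound : ‖∫ x, ⟪fderiv ℝ v x (u x), w x⟫ ∂μ‖ₑ ≤ (K : ℝ≥0∞) ^ 2 *
      eLpNorm (fderiv ℝ u) 2 μ * eLpNorm (fderiv ℝ v) 2 μ * eLpNorm (fderiv ℝ w) 2 μ :=
    calc _ ≤ eLpNorm (fun x ↦ ⟪fderiv ℝ v x (u x), w x⟫) 1 μ :=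
          (enorm_integral_le_lintegral_enorm _).trans_eq eLpNorm_one_eq_lintegral_enorm.symm
      _ ≤ eLpNorm (fderiv ℝ v) 2 μ * eLpNorm u 4 μ * eLpNorm w 4 μ :=
          eLpNorm_inner_apply_le (hv.continuous_fderiv one_ne_zero).aestronglyMeasurable
            hu.continuous.aestronglyMeasurable hw.continuous.aestronglyMeasurable
      _ ≤ eLpNorm (fderiv ℝ v) 2 μ * (K * eLpNorm (fderiv ℝ u) 2 μ) *
            (K * eLpNorm (fderiv ℝ w) 2 μ) := by
          gcongr
          exacts [hK u hu hsu, hK w hw hsw]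
      _ = _ := by ring
  have hreal := ENNReal.toReal_mono (by finiteness [(hL2 u hu hcu).eLpNorm_lt_top,
    (hL2 v hv hcv).eLpNorm_lt_top, (hL2 w hw hcw).eLpNorm_lt_top]) hbound
  simp only [toReal_enorm, Real.norm_eq_abs, ENNReal.toReal_mul, ENNReal.toReal_pow,
    ENNReal.coe_toReal, (hL2 u hu hcu).toReal_eLpNorm_two, (hL2 v hv hcv).toReal_eLpNorm_two,
    (hL2 w hw hcw).toReal_eLpNorm_two] at hreal
  refine hreal.trans ?_
  gcongr
  linarith

/-- For a bounded open set `Ω ⊆ ℝ^d` (d = 2 or 3) there exists `C > 0` such that for all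
continuously differentiable vector fields `u, v, w` with compact support in `Ω`,
`|(u·∇v, w)| ≤ C ‖Du‖_{L²} ‖Dv‖_{L²} ‖Dw‖_{L²}`. -/
theorem convective_form_le_grad_L2
    (d : ℕ) (hd : d = 2 ∨ d = 3)
    (Ω : Set (EuclideanSpace ℝ (Fin d)))
    (hΩopen : IsOpen Ω) (hΩbdd : Bornology.IsBounded Ω) :
    ∃ C : ℝ, 0 < C ∧
      ∀ u v w : EuclideanSpace ℝ (Fin d) → EuclideanSpace ℝ (Fin d),
        ContDiff ℝ 1 u → ContDiff ℝ 1 v → ContDiff ℝ 1 w →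
        HasCompactSupport u → HasCompactSupport v → HasCompactSupport w →
        tsupport u ⊆ Ω → tsupport v ⊆ Ω → tsupport w ⊆ Ω →
        |∫ x in Ω, ⟪(fderiv ℝ v x) (u x), w x⟫|
          ≤ C * Real.sqrt (∫ x in Ω, ‖fderiv ℝ u x‖ ^ 2)
              * Real.sqrt (∫ x in Ω, ‖fderiv ℝ v x‖ ^ 2)
              * Real.sqrt (∫ x in Ω, ‖fderiv ℝ w x‖ ^ 2) :=
  convective_form_le_grad_L2_general d hd Ω hΩbdd
end

section
/- Let Ω ⊆ ℝ^d (d = 2 or 3) be a bounded open set and define the skew-symmetrized trilinear form b(u, v, w) := ½((u·∇v, w) − (u·∇w, v)). There exists a constant C > 0 (depending only on Ω and d) such that for all continuously differentiable vector fields u, v, w : ℝ^d → ℝ^d with compact support contained in Ω, |b(u, v, w)| ≤ C · ‖Du‖_{L²} · ‖Dv‖_{L²} · ‖Dw‖_{L²}, where ‖Du‖_{L²} := (∫_Ω ‖Du(x)‖_op² dx)^{1/2} and similarly for v, w. -/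
/-!
Each of the two terms of the skew-symmetric form is estimated by Hölder's inequality with
exponents `(2, 4, 4)`: `|(u·∇v, w)| ≤ ‖Dv‖_{L²} ‖u‖_{L⁴} ‖w‖_{L⁴}`. In dimension `2 ≤ n ≤ 4` the
Gagliardo–Nirenberg–Sobolev inequality, combined with Hölder's inequality on the bounded set `Ω`,
bounds `‖u‖_{L⁴}` by a multiple of `‖Du‖_{L²}` for `C¹` fields supported in `Ω`.
-/

open scoped RealInnerProductSpace ENNReal NNReal
open MeasureTheory Module

section LpNorms

variable {α E : Type*} [MeasurableSpace α] {μ : Measure α} [NormedAddCommGroup E]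

theorem eLpNorm_le_eLpNorm_mul_rpow_measure_of_support_subset {f : α → E} {s : Set α}
    (hfs : Function.support f ⊆ s) (hf : AEStronglyMeasurable f μ) {p q : ℝ≥0∞} (hpq : p ≤ q) :
    eLpNorm f p μ ≤ eLpNorm f q μ * μ s ^ (1 / p.toReal - 1 / q.toReal) := by
  simpa [eLpNorm_restrict_eq_of_support_subset hfs] using
    eLpNorm_le_eLpNorm_mul_rpow_measure_univ hpq hf.restrict (μ := μ.restrict s)

theorem MeasureTheory.MemLp.eLpNorm_two_eq_ofReal_sqrt_integral {f : α → E} (hf : MemLp f 2 μ) :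
    eLpNorm f 2 μ = ENNReal.ofReal √(∫ x, ‖f x‖ ^ 2 ∂μ) := by
  rw [hf.eLpNorm_eq_integral_rpow_norm two_ne_zero ENNReal.ofNat_ne_top, Real.sqrt_eq_rpow]
  norm_num

instance ENNReal.holderTriple_four_four_two : ENNReal.HolderTriple 4 4 2 where
  inv_add_inv_eq_inv := by
    rw [← two_mul, show (4 : ℝ≥0∞) = 2 * 2 by norm_num, ENNReal.mul_inv (by simp) (by simp),
      ← mul_assoc, ENNReal.mul_inv_cancel (by simp) (by simp), one_mul]

theorem enorm_integral_inner_apply_le {F G : Type*} [NormedAddCommGroup F] [NormedSpace ℝ F]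
    [NormedAddCommGroup G] [InnerProductSpace ℝ G] {A : α → F →L[ℝ] G} {a : α → F} {c : α → G}
    (hA : AEStronglyMeasurable A μ) (ha : AEStronglyMeasurable a μ)
    (hc : AEStronglyMeasurable c μ) :
    ‖∫ x, ⟪A x (a x), c x⟫ ∂μ‖ₑ ≤ eLpNorm A 2 μ * (eLpNorm a 4 μ * eLpNorm c 4 μ) := by
  have hpointwise (x : α) : ‖⟪A x (a x), c x⟫‖ ≤ ‖A x‖ * (‖a x‖ * ‖c x‖) :=
    calc ‖⟪A x (a x), c x⟫‖ ≤ ‖A x (a x)‖ * ‖c x‖ := norm_inner_le_norm _ _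
      _ ≤ ‖A x‖ * ‖a x‖ * ‖c x‖ := by gcongr; exact (A x).le_opNorm _
      _ = ‖A x‖ * (‖a x‖ * ‖c x‖) := mul_assoc _ _ _
  calc ‖∫ x, ⟪A x (a x), c x⟫ ∂μ‖ₑ
      ≤ eLpNorm (fun x => ⟪A x (a x), c x⟫) 1 μ :=
        (enorm_integral_le_lintegral_enorm _).trans_eq eLpNorm_one_eq_lintegral_enorm.symm
    _ ≤ eLpNorm (fun x => ‖A x‖ * (‖a x‖ * ‖c x‖)) 1 μ := eLpNorm_mono_real hpointwise
    _ ≤ 1 * eLpNorm A 2 μ * eLpNorm (fun x => ‖a x‖ * ‖c x‖) 2 μ :=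
        eLpNorm_le_eLpNorm_mul_eLpNorm'_of_norm hA (ha.norm.mul hc.norm) (fun B t => ‖B‖ * t) 1
          (.of_forall fun x => by simp)
    _ ≤ eLpNorm A 2 μ * (1 * eLpNorm a 4 μ * eLpNorm c 4 μ) := by
        rw [one_mul]
        gcongr
        exact eLpNorm_le_eLpNorm_mul_eLpNorm'_of_norm ha hc (fun y z => ‖y‖ * ‖z‖) 1
          (.of_forall fun x => by simp)
    _ = eLpNorm A 2 μ * (eLpNorm a 4 μ * eLpNorm c 4 μ) := by rw [one_mul]

end LpNorms

section Sobolev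

variable {E : Type*} [NormedAddCommGroup E] [NormedSpace ℝ E] [FiniteDimensional ℝ E]
  [MeasurableSpace E] [BorelSpace E] {μ : Measure E} [μ.IsAddHaarMeasure] {s : Set E}

theorem eLpNorm_fderiv_two_eq_ofReal_sqrt_setIntegral {G : Type*} [NormedAddCommGroup G]
    [NormedSpace ℝ G] {u : E → G} (hu : ContDiff ℝ 1 u) (hs : Bornology.IsBounded s)
    (hsu : tsupport u ⊆ s) :
    eLpNorm (fderiv ℝ u) 2 μ = ENNReal.ofReal √(∫ x in s, ‖fderiv ℝ u x‖ ^ 2 ∂μ) := by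
  have hcpt : HasCompactSupport u := .of_support_subset_isCompact hs.isCompact_closure
    ((subset_tsupport u).trans (hsu.trans subset_closure))
  have hDu : MemLp (fderiv ℝ u) 2 (μ.restrict s) :=
    ((hu.continuous_fderiv one_ne_zero).memLp_of_hasCompactSupport
      (hcpt.fderiv (𝕜 := ℝ))).restrict s
  rw [← hDu.eLpNorm_two_eq_ofReal_sqrt_integral,
    eLpNorm_restrict_eq_of_support_subset ((support_fderiv_subset ℝ).trans hsu)]

theorem exists_eLpNorm_four_le_mul_eLpNorm_fderiv_two (F : Type*) [NormedAddCommGroup F]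
    [NormedSpace ℝ F] [FiniteDimensional ℝ F] (hE : 2 ≤ finrank ℝ E) (hE' : finrank ℝ E ≤ 4)
    (hs : Bornology.IsBounded s) :
    ∃ K : ℝ≥0, ∀ u : E → F, ContDiff ℝ 1 u → tsupport u ⊆ s →
      eLpNorm u 4 μ ≤ K * eLpNorm (fderiv ℝ u) 2 μ := by
  set n := finrank ℝ E
  have hn : (2 : ℝ) ≤ n := by exact_mod_cast hE
  have hn' : (n : ℝ) ≤ 4 := by exact_mod_cast hE'
  -- `p⁻¹ - n⁻¹ = 4⁻¹`, and `1 ≤ p ≤ 2` exactly when `2 ≤ n ≤ 4`.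
  set p : ℝ≥0 := 4 * n / (n + 4)
  have hp : (p : ℝ) = 4 * n / (n + 4) := by simp [p]
  have hp1 : 1 ≤ p := by
    rw [← NNReal.coe_le_coe, hp, NNReal.coe_one, le_div_iff₀ (by positivity)]; linarith
  have hpn : p < n := by
    rw [← NNReal.coe_lt_coe, hp, NNReal.coe_natCast, div_lt_iff₀ (by positivity)]; nlinarith
  have hpq : (p : ℝ)⁻¹ - (n : ℝ)⁻¹ ≤ ((4 : ℝ≥0) : ℝ)⁻¹ := by
    rw [hp]; field_simp; push_cast; nlinarith
  have hp2 : (p : ℝ≥0∞) ≤ 2 := by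
    rw [← ENNReal.coe_ofNat, ENNReal.coe_le_coe, ← NNReal.coe_le_coe, hp, NNReal.coe_ofNat,
      div_le_iff₀ (by positivity)]; linarith
  set e := 1 / (p : ℝ≥0∞).toReal - 1 / (2 : ℝ≥0∞).toReal with he_def
  have he : 0 ≤ e := by
    rw [he_def, ENNReal.coe_toReal, ENNReal.toReal_ofNat, hp, one_div_div, sub_nonneg,
      div_le_div_iff₀ (by positivity) (by positivity)]; linarith
  set C := eLpNormLESNormFDerivOfLeConst F μ s p 4
  refine ⟨C * (μ s).toNNReal ^ e, fun u hu hsu => ?_⟩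
  calc eLpNorm u 4 μ
      ≤ C * eLpNorm (fderiv ℝ u) p μ :=
        eLpNorm_le_eLpNorm_fderiv_of_le μ hu ((subset_tsupport u).trans hsu) hp1 hpn hpq hs
    _ ≤ C * (eLpNorm (fderiv ℝ u) 2 μ * μ s ^ e) := by
        gcongr
        exact eLpNorm_le_eLpNorm_mul_rpow_measure_of_support_subset
          ((support_fderiv_subset ℝ).trans hsu)
          (hu.continuous_fderiv one_ne_zero).aestronglyMeasurable hp2
    _ = ↑(C * (μ s).toNNReal ^ e) * eLpNorm (fderiv ℝ u) 2 μ := by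
        rw [ENNReal.coe_mul, ENNReal.coe_rpow_of_nonneg _ he,
          ENNReal.coe_toNNReal hs.measure_lt_top.ne]
        ring

end Sobolev

section Trilinear

variable {E F : Type*} [NormedAddCommGroup E] [NormedSpace ℝ E] [FiniteDimensional ℝ E]
  [MeasurableSpace E] [BorelSpace E] {μ : Measure E} [μ.IsAddHaarMeasure] {s : Set E}
  [NormedAddCommGroup F] [InnerProductSpace ℝ F] [FiniteDimensional ℝ F]

theorem exists_abs_setIntegral_inner_fderiv_apply_le (hE : 2 ≤ finrank ℝ E)
    (hE' : finrank ℝ E ≤ 4) (hs : Bornology.IsBounded s) :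
    ∃ K : ℝ≥0, ∀ (u : E → E) (v w : E → F), ContDiff ℝ 1 u → ContDiff ℝ 1 v → ContDiff ℝ 1 w →
      tsupport u ⊆ s → tsupport v ⊆ s → tsupport w ⊆ s →
      |∫ x in s, ⟪fderiv ℝ v x (u x), w x⟫ ∂μ|
        ≤ K * √(∫ x in s, ‖fderiv ℝ u x‖ ^ 2 ∂μ) * √(∫ x in s, ‖fderiv ℝ v x‖ ^ 2 ∂μ)
          * √(∫ x in s, ‖fderiv ℝ w x‖ ^ 2 ∂μ) := by
  obtain ⟨K₁, hK₁⟩ := exists_eLpNorm_four_le_mul_eLpNorm_fderiv_two (μ := μ) E hE hE' hs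
  obtain ⟨K₂, hK₂⟩ := exists_eLpNorm_four_le_mul_eLpNorm_fderiv_two (μ := μ) F hE hE' hs
  refine ⟨K₁ * K₂, fun u v w hu hv hw hsu hsv hsw => ?_⟩
  have hHolder := enorm_integral_inner_apply_le (μ := μ.restrict s)
    (hv.continuous_fderiv one_ne_zero).aestronglyMeasurable hu.continuous.aestronglyMeasurable
    hw.continuous.aestronglyMeasurable
  rw [eLpNorm_restrict_eq_of_support_subset (f := fderiv ℝ v)
      ((support_fderiv_subset ℝ).trans hsv),
    eLpNorm_restrict_eq_of_support_subset (f := u) ((subset_tsupport u).trans hsu),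
    eLpNorm_restrict_eq_of_support_subset (f := w) ((subset_tsupport w).trans hsw),
    eLpNorm_fderiv_two_eq_ofReal_sqrt_setIntegral hv hs hsv] at hHolder
  have hSobolev_u := hK₁ u hu hsu
  have hSobolev_w := hK₂ w hw hsw
  rw [eLpNorm_fderiv_two_eq_ofReal_sqrt_setIntegral hu hs hsu] at hSobolev_u
  rw [eLpNorm_fderiv_two_eq_ofReal_sqrt_setIntegral hw hs hsw] at hSobolev_w
  set Nu := √(∫ x in s, ‖fderiv ℝ u x‖ ^ 2 ∂μ)
  set Nv := √(∫ x in s, ‖fderiv ℝ v x‖ ^ 2 ∂μ)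
  set Nw := √(∫ x in s, ‖fderiv ℝ w x‖ ^ 2 ∂μ)
  rw [← ENNReal.ofReal_le_ofReal_iff (by positivity), ← Real.enorm_eq_ofReal_abs]
  calc ‖∫ x in s, ⟪fderiv ℝ v x (u x), w x⟫ ∂μ‖ₑ
      ≤ ENNReal.ofReal Nv * (eLpNorm u 4 μ * eLpNorm w 4 μ) := hHolder
    _ ≤ ENNReal.ofReal Nv * (K₁ * ENNReal.ofReal Nu * (K₂ * ENNReal.ofReal Nw)) := by gcongr
    _ = ENNReal.ofReal (↑(K₁ * K₂) * Nu * Nv * Nw) := by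
        rw [ENNReal.ofReal_mul (by positivity), ENNReal.ofReal_mul (by positivity),
          ENNReal.ofReal_mul (by positivity), ENNReal.ofReal_coe_nnreal, ENNReal.coe_mul]
        ring

end Trilinear

theorem abs_half_mul_sub_le {a b M : ℝ} (ha : |a| ≤ M) (hb : |b| ≤ M) :
    |1 / 2 * (a - b)| ≤ M := by
  rw [abs_le] at *
  constructor <;> linarith

theorem skew_symmetric_form_le_grad_L2_general
    (d : ℕ) (hd : d = 2 ∨ d = 3)
    (Ω : Set (EuclideanSpace ℝ (Fin d)))
    (hΩbdd : Bornology.IsBounded Ω) :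
    ∃ C : ℝ, 0 < C ∧
      ∀ u v w : EuclideanSpace ℝ (Fin d) → EuclideanSpace ℝ (Fin d),
        ContDiff ℝ 1 u → ContDiff ℝ 1 v → ContDiff ℝ 1 w →
        HasCompactSupport u → HasCompactSupport v → HasCompactSupport w →
        tsupport u ⊆ Ω → tsupport v ⊆ Ω → tsupport w ⊆ Ω →
        |(1 / 2 : ℝ) * ((∫ x in Ω, ⟪(fderiv ℝ v x) (u x), w x⟫)
              - ∫ x in Ω, ⟪(fderiv ℝ w x) (u x), v x⟫)|
          ≤ C * Real.sqrt (∫ x in Ω, ‖fderiv ℝ u x‖ ^ 2)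
              * Real.sqrt (∫ x in Ω, ‖fderiv ℝ v x‖ ^ 2)
              * Real.sqrt (∫ x in Ω, ‖fderiv ℝ w x‖ ^ 2) := by
  have hdim : finrank ℝ (EuclideanSpace ℝ (Fin d)) = d := finrank_euclideanSpace_fin
  obtain ⟨K, hK⟩ := exists_abs_setIntegral_inner_fderiv_apply_le
    (F := EuclideanSpace ℝ (Fin d)) (μ := volume) (by omega) (by omega) hΩbdd
  refine ⟨K + 1, by positivity, fun u v w hu hv hw _ _ _ hsu hsv hsw => ?_⟩
  calc _ ≤ K * √(∫ x in Ω, ‖fderiv ℝ u x‖ ^ 2) * √(∫ x in Ω, ‖fderiv ℝ v x‖ ^ 2)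
          * √(∫ x in Ω, ‖fderiv ℝ w x‖ ^ 2) :=
        abs_half_mul_sub_le (hK u v w hu hv hw hsu hsv hsw)
          ((hK u w v hu hw hv hsu hsw hsv).trans_eq (by ring))
    _ ≤ _ := by gcongr; linarith

/-- For a bounded open set `Ω ⊆ ℝ^d` (d = 2 or 3) there exists `C > 0` such that for all
continuously differentiable vector fields `u, v, w` with compact support in `Ω`, the
skew-symmetrized trilinear form `b(u,v,w) = ½((u·∇v, w) − (u·∇w, v))` satisfies
`|b(u, v, w)| ≤ C ‖Du‖_{L²} ‖Dv‖_{L²} ‖Dw‖_{L²}`. -/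
theorem skew_symmetric_form_le_grad_L2
    (d : ℕ) (hd : d = 2 ∨ d = 3)
    (Ω : Set (EuclideanSpace ℝ (Fin d)))
    (hΩopen : IsOpen Ω) (hΩbdd : Bornology.IsBounded Ω) :
    ∃ C : ℝ, 0 < C ∧
      ∀ u v w : EuclideanSpace ℝ (Fin d) → EuclideanSpace ℝ (Fin d),
        ContDiff ℝ 1 u → ContDiff ℝ 1 v → ContDiff ℝ 1 w →
        HasCompactSupport u → HasCompactSupport v → HasCompactSupport w →
        tsupport u ⊆ Ω → tsupport v ⊆ Ω → tsupport w ⊆ Ω →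
        |(1 / 2 : ℝ) * ((∫ x in Ω, ⟪(fderiv ℝ v x) (u x), w x⟫)
              - ∫ x in Ω, ⟪(fderiv ℝ w x) (u x), v x⟫)|
          ≤ C * Real.sqrt (∫ x in Ω, ‖fderiv ℝ u x‖ ^ 2)
              * Real.sqrt (∫ x in Ω, ‖fderiv ℝ v x‖ ^ 2)
              * Real.sqrt (∫ x in Ω, ‖fderiv ℝ w x‖ ^ 2) :=
  skew_symmetric_form_le_grad_L2_general d hd Ω hΩbdd
end

section
/- In the abstract framework for the nudged implicit Euler scheme for an advected scalar, for every n ≥ 0 the solution satisfies the one-step stability estimate ‖θ_{n+1}‖² − ‖θ_n‖² + κΔt ‖Dθ_{n+1}‖² ≤ μΔt M_τ² + κ^{-1}Δt M_g². -/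
open scoped RealInnerProductSpace

/-- One-step stability estimate for the nudged implicit Euler scheme for an advected
scalar: `‖θ_{n+1}‖² − ‖θ_n‖² + κΔt ‖Dθ_{n+1}‖² ≤ μΔt M_τ² + κ⁻¹Δt M_g²`. -/
theorem nudged_scalar_one_step_stability
    {H F : Type*} [NormedAddCommGroup H] [InnerProductSpace ℝ H]
    [NormedAddCommGroup F] [InnerProductSpace ℝ F]
    (V : Submodule ℝ H) (D : V →ₗ[ℝ] F)
    (C_PF : ℝ) (hC_PF : 0 < C_PF)
    (hPF : ∀ ψ : V, ‖(ψ : H)‖ ≤ C_PF * ‖D ψ‖)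
    (I : H →ₗ[ℝ] H) (hI : ∀ φ : H, ‖I φ‖ ≤ ‖φ‖)
    (Δt κ μ : ℝ) (hΔt : 0 < Δt) (hκ : 0 < κ) (hμ : 0 < μ)
    (b : ℕ → V →ₗ[ℝ] V →ₗ[ℝ] ℝ) (hb : ∀ n (ψ : V), b n ψ ψ = 0)
    (τ : ℕ → H) (Mτ : ℝ) (hτ : ∀ n, ‖τ n‖ ≤ Mτ)
    (g : ℕ → V →ₗ[ℝ] ℝ) (Mg : ℝ) (hg : ∀ n (ψ : V), |g n ψ| ≤ Mg * ‖D ψ‖)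
    (θ : ℕ → V)
    (hscheme : ∀ n (ψ : V),
      (1 / Δt) * ⟪θ (n + 1) - θ n, ψ⟫ + b n (θ (n + 1)) ψ
        + κ * ⟪D (θ (n + 1)), D ψ⟫
        + μ * ⟪I ((θ (n + 1) : H) - τ (n + 1)), I (ψ : H)⟫ = g (n + 1) ψ) :
    ∀ n, ‖θ (n + 1)‖ ^ 2 - ‖θ n‖ ^ 2 + κ * Δt * ‖D (θ (n + 1))‖ ^ 2
      ≤ μ * Δt * Mτ ^ 2 + κ⁻¹ * Δt * Mg ^ 2 := by
  intro n
  have Mτ0 : 0 ≤ Mτ := le_trans (norm_nonneg _) (hτ 0)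
  set a := θ (n + 1) with ha
  have e := hscheme n a
  rw [hb] at e
  rw [real_inner_self_eq_norm_sq] at e
  have h1 : (‖a‖ ^ 2 - ‖θ n‖ ^ 2) / 2 ≤ ⟪a - θ n, a⟫ := by
    have hc := real_inner_le_norm (θ n) a
    rw [inner_sub_left, real_inner_self_eq_norm_sq]
    nlinarith [sq_nonneg (‖θ n‖ - ‖a‖)]
  have h2 : -(Mτ ^ 2 / 4) ≤ ⟪I ((a : H) - τ (n + 1)), I (a : H)⟫ := by
    have hi1 := real_inner_le_norm (I (τ (n + 1))) (I (a : H))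
    have hi2 := hI (τ (n + 1))
    have hi3 := hτ (n + 1)
    have hi4 := norm_nonneg (I (a : H))
    have hi5 := norm_nonneg (I (τ (n + 1)))
    rw [map_sub, inner_sub_left, real_inner_self_eq_norm_sq]
    nlinarith [sq_nonneg (‖I (a : H)‖ - Mτ / 2)]
  have h3 : g (n + 1) a ≤ (κ * ‖D a‖ ^ 2 + κ⁻¹ * Mg ^ 2) / 2 := by
    have habs : g (n + 1) a ≤ Mg * ‖D a‖ := le_trans (le_abs_self _) (hg (n + 1) a)
    have hκ' : 0 < κ⁻¹ := inv_pos.mpr hκ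
    have hcan : κ⁻¹ * κ = 1 := inv_mul_cancel₀ hκ.ne'
    nlinarith [mul_nonneg hκ'.le (sq_nonneg (κ * ‖D a‖ - Mg))]
  have hΔ : Δt ≠ 0 := hΔt.ne'
  have e' : ⟪a - θ n, a⟫ + Δt * κ * ‖D a‖ ^ 2
      + Δt * μ * ⟪I ((a : H) - τ (n + 1)), I (a : H)⟫ = Δt * g (n + 1) a := by
    simp only [Submodule.coe_inner, Submodule.coe_sub, map_sub] at e ⊢
    field_simp at e
    linarith
  have p2 : μ * Δt * (-(Mτ ^ 2 / 4)) ≤ μ * Δt * ⟪I ((a : H) - τ (n + 1)), I (a : H)⟫ :=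
    mul_le_mul_of_nonneg_left h2 (by positivity)
  have p3 : Δt * g (n + 1) a ≤ Δt * ((κ * ‖D a‖ ^ 2 + κ⁻¹ * Mg ^ 2) / 2) :=
    mul_le_mul_of_nonneg_left h3 hΔt.le
  nlinarith [p2, p3, h1, e', mul_pos hμ hΔt, sq_nonneg Mτ]
end

section
/- In the abstract framework for the nudged implicit Euler scheme for an advected scalar, set λ := min{κΔt/(4C_PF²), 1}. Then for every n ≥ 0 the solution satisfies the contraction recursion (1 + λ)(‖θ_{n+1}‖² + (κΔt/4)‖Dθ_{n+1}‖²) ≤ ‖θ_n‖² + (κΔt/4)‖Dθ_n‖² + μΔt M_τ² + κ^{-1}Δt M_g². -/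
open scoped RealInnerProductSpace

private lemma nudged_aux (C_PF Δt κ μ Mτ Mg x y bx by' P G BA : ℝ)
    (hC_PF : 0 < C_PF) (hΔt : 0 < Δt) (hκ : 0 < κ) (hμ : 0 < μ)
    (hMτ0 : 0 ≤ Mτ)
    (hX : x ^ 2 - BA = Δt * G - Δt * (κ * y ^ 2) - Δt * (μ * P))
    (hBA : BA ≤ bx * x) (hbx : 0 ≤ bx)
    (hP : -(Mτ ^ 2 / 4) ≤ P)
    (hG : G ≤ Mg * y)
    (hxy : x ≤ C_PF * y) (hx0 : 0 ≤ x) (hy0 : 0 ≤ y) (hby : 0 ≤ by') :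
    (1 + min (κ * Δt / (4 * C_PF ^ 2)) 1) * (x ^ 2 + κ * Δt / 4 * y ^ 2)
      ≤ bx ^ 2 + κ * Δt / 4 * by' ^ 2 + μ * Δt * Mτ ^ 2 + κ⁻¹ * Δt * Mg ^ 2 := by
  have hx2 : x ^ 2 ≤ C_PF ^ 2 * y ^ 2 := by nlinarith
  have hBA2 : BA ≤ x ^ 2 / 2 + bx ^ 2 / 2 := by nlinarith [sq_nonneg (x - bx)]
  have hGy : Δt * G ≤ κ * Δt / 2 * y ^ 2 + κ⁻¹ * Δt * Mg ^ 2 / 2 := by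
    have hkey : Δt * (Mg * y) * κ ≤ (κ * Δt / 2 * y ^ 2 + κ⁻¹ * Δt * Mg ^ 2 / 2) * κ := by
      have hconv : (κ⁻¹ * Δt * Mg ^ 2 / 2) * κ = Δt * Mg ^ 2 / 2 := by
        field_simp
      rw [add_mul, hconv]
      nlinarith [mul_nonneg hΔt.le (sq_nonneg (κ * y - Mg))]
    have h9 : Δt * (Mg * y) ≤ κ * Δt / 2 * y ^ 2 + κ⁻¹ * Δt * Mg ^ 2 / 2 :=
      le_of_mul_le_mul_right hkey hκ
    have h8 : Δt * G ≤ Δt * (Mg * y) := mul_le_mul_of_nonneg_left hG hΔt.le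
    linarith
  have hPμ : -(μ * Δt * Mτ ^ 2 / 4) ≤ Δt * (μ * P) := by
    have h10 := mul_le_mul_of_nonneg_left hP (mul_nonneg hΔt.le hμ.le)
    nlinarith [h10]
  have E1 : x ^ 2 + κ * Δt * y ^ 2 ≤ bx ^ 2 + μ * Δt * Mτ ^ 2 / 2 + κ⁻¹ * Δt * Mg ^ 2 := by
    linarith
  set L := min (κ * Δt / (4 * C_PF ^ 2)) 1 with hL
  have hL1 : L ≤ κ * Δt / (4 * C_PF ^ 2) := min_le_left _ _
  have hL2 : L ≤ 1 := min_le_right _ _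
  have hL0 : 0 ≤ L := le_min (by positivity) zero_le_one
  have h4L : L * (4 * C_PF ^ 2) ≤ κ * Δt := (le_div_iff₀ (by positivity)).mp hL1
  have hLx : L * x ^ 2 ≤ κ * Δt / 4 * y ^ 2 := by
    have t1 := mul_le_mul_of_nonneg_left hx2 hL0
    have t2 := mul_le_mul_of_nonneg_right h4L (sq_nonneg y)
    linarith [t1, t2]
  have hLy : L * (κ * Δt / 4 * y ^ 2) ≤ κ * Δt / 4 * y ^ 2 := by
    have hpos : (0:ℝ) ≤ κ * Δt / 4 * y ^ 2 := by positivity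
    exact mul_le_of_le_one_left hpos hL2
  have hMτterm : 0 ≤ μ * Δt * Mτ ^ 2 / 2 := by positivity
  have hDB0 : (0:ℝ) ≤ κ * Δt / 4 * by' ^ 2 := by positivity
  have hcy : (0:ℝ) ≤ κ * Δt / 4 * y ^ 2 := by positivity
  linarith [E1, hLx, hLy, hMτterm, hDB0, hcy]

/-- Contraction recursion for the nudged implicit Euler scheme for an advected scalar:
with `λ = min{κΔt/(4C_PF²), 1}`,
`(1 + λ)(‖θ_{n+1}‖² + (κΔt/4)‖Dθ_{n+1}‖²) ≤ ‖θ_n‖² + (κΔt/4)‖Dθ_n‖² + μΔt M_τ² + κ⁻¹Δt M_g²`. -/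
theorem nudged_scalar_contraction_recursion
    {H F : Type*} [NormedAddCommGroup H] [InnerProductSpace ℝ H]
    [NormedAddCommGroup F] [InnerProductSpace ℝ F]
    (V : Submodule ℝ H) (D : V →ₗ[ℝ] F)
    (C_PF : ℝ) (hC_PF : 0 < C_PF)
    (hPF : ∀ ψ : V, ‖(ψ : H)‖ ≤ C_PF * ‖D ψ‖)
    (I : H →ₗ[ℝ] H) (hI : ∀ φ : H, ‖I φ‖ ≤ ‖φ‖)
    (Δt κ μ : ℝ) (hΔt : 0 < Δt) (hκ : 0 < κ) (hμ : 0 < μ)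
    (b : ℕ → V →ₗ[ℝ] V →ₗ[ℝ] ℝ) (hb : ∀ n (ψ : V), b n ψ ψ = 0)
    (τ : ℕ → H) (Mτ : ℝ) (hτ : ∀ n, ‖τ n‖ ≤ Mτ)
    (g : ℕ → V →ₗ[ℝ] ℝ) (Mg : ℝ) (hg : ∀ n (ψ : V), |g n ψ| ≤ Mg * ‖D ψ‖)
    (θ : ℕ → V)
    (hscheme : ∀ n (ψ : V),
      (1 / Δt) * ⟪θ (n + 1) - θ n, ψ⟫ + b n (θ (n + 1)) ψ
        + κ * ⟪D (θ (n + 1)), D ψ⟫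
        + μ * ⟪I ((θ (n + 1) : H) - τ (n + 1)), I (ψ : H)⟫ = g (n + 1) ψ) :
    ∀ n, (1 + min (κ * Δt / (4 * C_PF ^ 2)) 1)
          * (‖θ (n + 1)‖ ^ 2 + κ * Δt / 4 * ‖D (θ (n + 1))‖ ^ 2)
      ≤ ‖θ n‖ ^ 2 + κ * Δt / 4 * ‖D (θ n)‖ ^ 2
          + μ * Δt * Mτ ^ 2 + κ⁻¹ * Δt * Mg ^ 2 := by
  intro n
  have hψ := hscheme n (θ (n + 1))
  rw [hb] at hψ
  have hMτ0 : 0 ≤ Mτ := le_trans (norm_nonneg _) (hτ 0)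
  have h1 : ⟪θ (n + 1) - θ n, θ (n + 1)⟫
      = ‖θ (n + 1)‖ ^ 2 - ⟪θ n, θ (n + 1)⟫ := by
    rw [inner_sub_left, real_inner_self_eq_norm_sq]
  have hDA : ⟪D (θ (n + 1)), D (θ (n + 1))⟫ = ‖D (θ (n + 1))‖ ^ 2 :=
    real_inner_self_eq_norm_sq _
  have hne : Δt ≠ 0 := ne_of_gt hΔt
  have hstep : (1 / Δt) * ⟪θ (n + 1) - θ n, θ (n + 1)⟫
      = g (n + 1) (θ (n + 1)) - κ * ‖D (θ (n + 1))‖ ^ 2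
        - μ * ⟪I ((θ (n + 1) : H) - τ (n + 1)), I ((θ (n + 1) : H))⟫ := by
    rw [hDA] at hψ
    linarith [hψ]
  have hX : ‖θ (n + 1)‖ ^ 2 - ⟪θ n, θ (n + 1)⟫
      = Δt * (g (n + 1) (θ (n + 1))) - Δt * (κ * ‖D (θ (n + 1))‖ ^ 2)
        - Δt * (μ * ⟪I ((θ (n + 1) : H) - τ (n + 1)), I ((θ (n + 1) : H))⟫) := by
    have hc : ⟪θ (n + 1) - θ n, θ (n + 1)⟫
        = Δt * (g (n + 1) (θ (n + 1)) - κ * ‖D (θ (n + 1))‖ ^ 2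
            - μ * ⟪I ((θ (n + 1) : H) - τ (n + 1)), I ((θ (n + 1) : H))⟫) := by
      calc ⟪θ (n + 1) - θ n, θ (n + 1)⟫
          = Δt * ((1 / Δt) * ⟪θ (n + 1) - θ n, θ (n + 1)⟫) := by
            rw [one_div, mul_inv_cancel_left₀ hne]
        _ = _ := by rw [hstep]
    rw [← h1, hc]; ring
  have hPbound : -(Mτ ^ 2 / 4)
      ≤ ⟪I ((θ (n + 1) : H) - τ (n + 1)), I ((θ (n + 1) : H))⟫ := by
    have hPexp : ⟪I ((θ (n + 1) : H) - τ (n + 1)), I ((θ (n + 1) : H))⟫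
        = ‖I ((θ (n + 1) : H))‖ ^ 2 - ⟪I (τ (n + 1)), I ((θ (n + 1) : H))⟫ := by
      rw [map_sub, inner_sub_left, real_inner_self_eq_norm_sq]
    have h3 : ⟪I (τ (n + 1)), I ((θ (n + 1) : H))⟫
        ≤ ‖I (τ (n + 1))‖ * ‖I ((θ (n + 1) : H))‖ := real_inner_le_norm _ _
    have h4 : ‖I (τ (n + 1))‖ ≤ Mτ := le_trans (hI _) (hτ _)
    have h5 : (0:ℝ) ≤ ‖I ((θ (n + 1) : H))‖ := norm_nonneg _
    have h6 : (0:ℝ) ≤ ‖I (τ (n + 1))‖ := norm_nonneg _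
    nlinarith [sq_nonneg (‖I ((θ (n + 1) : H))‖ - Mτ / 2)]
  exact nudged_aux C_PF Δt κ μ Mτ Mg ‖θ (n + 1)‖ ‖D (θ (n + 1))‖ ‖θ n‖ ‖D (θ n)‖
    (⟪I ((θ (n + 1) : H) - τ (n + 1)), I ((θ (n + 1) : H))⟫)
    (g (n + 1) (θ (n + 1))) (⟪θ n, θ (n + 1)⟫)
    hC_PF hΔt hκ hμ hMτ0 hX (real_inner_le_norm _ _) (norm_nonneg _)
    hPbound (le_trans (le_abs_self _) (hg (n + 1) (θ (n + 1))))
    (hPF (θ (n + 1))) (norm_nonneg _) (norm_nonneg _) (norm_nonneg _)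
end

section
/- In the abstract framework for the nudged implicit Euler scheme for an advected scalar, set λ := min{κΔt/(4C_PF²), 1}. Then the solution is stable at all time levels without any time-step restriction: for every n ≥ 0, ‖θ_{n+1}‖² + (κΔt/4)‖Dθ_{n+1}‖² ≤ (1 + λ)^{-(n+1)} (‖θ_0‖² + (κΔt/4)‖Dθ_0‖²) + max{4μC_PF²/κ, μΔt} M_τ² + max{4C_PF²/κ², Δt/κ} M_g². -/
open scoped RealInnerProductSpace

private lemma geom_decay_aux (lam C : ℝ) (hlam : 0 < lam) (hC : 0 ≤ C)
    (e : ℕ → ℝ) (hstep : ∀ n, (1 + lam) * e (n + 1) ≤ e n + C) :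
    ∀ n, e n ≤ ((1 + lam) ^ n)⁻¹ * e 0 + C / lam := by
  have h1 : (0:ℝ) < 1 + lam := by linarith
  intro n
  induction n with
  | zero =>
    have : 0 ≤ C / lam := div_nonneg hC hlam.le
    simp
    linarith
  | succ n ih =>
    have h2 : e (n + 1) ≤ (e n + C) / (1 + lam) := by
      rw [le_div_iff₀ h1]; linarith [hstep n]
    have h3 : (e n + C) / (1 + lam)
        ≤ (((1 + lam) ^ n)⁻¹ * e 0 + C / lam + C) / (1 + lam) :=
      (div_le_div_iff_of_pos_right h1).mpr (by linarith)
    have h4 : (((1 + lam) ^ n)⁻¹ * e 0 + C / lam + C) / (1 + lam)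
        = ((1 + lam) ^ (n + 1))⁻¹ * e 0 + C / lam := by
      have hp : ((1 + lam) ^ n) ≠ 0 := pow_ne_zero _ h1.ne'
      field_simp
      ring
    rw [h4] at h3
    linarith


private lemma step_arith (lam Δt κ μ C_PF Mτ Mg A B d dn w ip1 ip2 gv : ℝ)
    (hΔt : 0 < Δt) (hκ : 0 < κ) (hμ : 0 < μ) (hCPF : 0 < C_PF)
    (hlam_pos : 0 < lam) (hlam1 : lam ≤ 1) (hlam2 : lam ≤ κ * Δt / (4 * C_PF ^ 2))
    (heq : (1 / Δt) * (A ^ 2 - ip1) + κ * d ^ 2 + μ * (w ^ 2 - ip2) = gv)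
    (hip1 : ip1 ≤ (A ^ 2 + B ^ 2) / 2)
    (hip2 : ip2 ≤ Mτ ^ 2 / 2 + w ^ 2 / 2)
    (hgv : gv ≤ κ * d ^ 2 / 2 + Mg ^ 2 / (2 * κ))
    (hA2 : A ^ 2 ≤ C_PF ^ 2 * d ^ 2)
    (hdn : 0 ≤ dn) :
    (1 + lam) * (A ^ 2 + κ * Δt / 4 * d ^ 2)
      ≤ (B ^ 2 + κ * Δt / 4 * dn ^ 2) + (μ * Δt * Mτ ^ 2 + Δt * Mg ^ 2 / κ) := by
  have heq2 : A ^ 2 - ip1 + Δt * (κ * d ^ 2) + Δt * (μ * (w ^ 2 - ip2)) = Δt * gv := by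
    field_simp at heq
    linarith
  have hip2' : Δt * (μ * ip2) ≤ Δt * (μ * (Mτ ^ 2 / 2 + w ^ 2 / 2)) :=
    mul_le_mul_of_nonneg_left (mul_le_mul_of_nonneg_left hip2 hμ.le) hΔt.le
  have hgv' : Δt * gv ≤ Δt * (κ * d ^ 2 / 2 + Mg ^ 2 / (2 * κ)) :=
    mul_le_mul_of_nonneg_left hgv hΔt.le
  have hMg : Δt * (Mg ^ 2 / (2 * κ)) = Δt * Mg ^ 2 / κ / 2 := by
    rw [div_div, mul_div_assoc, mul_comm κ 2]
  have hw2 : 0 ≤ Δt * (μ * w ^ 2) := by positivity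
  have hlamA : lam * A ^ 2 ≤ κ * Δt / 4 * d ^ 2 := by
    have h1 : lam * A ^ 2 ≤ lam * (C_PF ^ 2 * d ^ 2) :=
      mul_le_mul_of_nonneg_left hA2 hlam_pos.le
    have h2 : lam * (C_PF ^ 2 * d ^ 2) ≤ κ * Δt / (4 * C_PF ^ 2) * (C_PF ^ 2 * d ^ 2) :=
      mul_le_mul_of_nonneg_right hlam2 (by positivity)
    have h3 : κ * Δt / (4 * C_PF ^ 2) * (C_PF ^ 2 * d ^ 2) = κ * Δt / 4 * d ^ 2 := by
      field_simp
    linarith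
  have hlamd : lam * (κ * Δt / 4 * d ^ 2) ≤ κ * Δt / 4 * d ^ 2 := by
    have h0 : 0 ≤ κ * Δt / 4 * d ^ 2 := by positivity
    nlinarith
  have hdn' : 0 ≤ κ * Δt / 4 * dn ^ 2 := by positivity
  nlinarith [heq2, hip2', hgv', hMg, hw2, hlamA, hlamd, hdn', hip1]

set_option maxHeartbeats 1000000 in
/-- Long-time stability of the nudged implicit Euler scheme for an advected scalar,
without any time-step restriction: with `λ = min{κΔt/(4C_PF²), 1}`,
`‖θ_{n+1}‖² + (κΔt/4)‖Dθ_{n+1}‖² ≤ (1 + λ)^{-(n+1)}(‖θ_0‖² + (κΔt/4)‖Dθ_0‖²)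
  + max{4μC_PF²/κ, μΔt} M_τ² + max{4C_PF²/κ², Δt/κ} M_g²`. -/
theorem nudged_scalar_long_time_stability
    {H F : Type*} [NormedAddCommGroup H] [InnerProductSpace ℝ H]
    [NormedAddCommGroup F] [InnerProductSpace ℝ F]
    (V : Submodule ℝ H) (D : V →ₗ[ℝ] F)
    (C_PF : ℝ) (hC_PF : 0 < C_PF)
    (hPF : ∀ ψ : V, ‖(ψ : H)‖ ≤ C_PF * ‖D ψ‖)
    (I : H →ₗ[ℝ] H) (hI : ∀ φ : H, ‖I φ‖ ≤ ‖φ‖)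
    (Δt κ μ : ℝ) (hΔt : 0 < Δt) (hκ : 0 < κ) (hμ : 0 < μ)
    (b : ℕ → V →ₗ[ℝ] V →ₗ[ℝ] ℝ) (hb : ∀ n (ψ : V), b n ψ ψ = 0)
    (τ : ℕ → H) (Mτ : ℝ) (hτ : ∀ n, ‖τ n‖ ≤ Mτ)
    (g : ℕ → V →ₗ[ℝ] ℝ) (Mg : ℝ) (hg : ∀ n (ψ : V), |g n ψ| ≤ Mg * ‖D ψ‖)
    (θ : ℕ → V)
    (hscheme : ∀ n (ψ : V),
      (1 / Δt) * ⟪θ (n + 1) - θ n, ψ⟫ + b n (θ (n + 1)) ψ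
        + κ * ⟪D (θ (n + 1)), D ψ⟫
        + μ * ⟪I ((θ (n + 1) : H) - τ (n + 1)), I (ψ : H)⟫ = g (n + 1) ψ) :
    ∀ n, ‖θ (n + 1)‖ ^ 2 + κ * Δt / 4 * ‖D (θ (n + 1))‖ ^ 2
      ≤ ((1 + min (κ * Δt / (4 * C_PF ^ 2)) 1) ^ (n + 1))⁻¹
            * (‖θ 0‖ ^ 2 + κ * Δt / 4 * ‖D (θ 0)‖ ^ 2)
        + max (4 * μ * C_PF ^ 2 / κ) (μ * Δt) * Mτ ^ 2
        + max (4 * C_PF ^ 2 / κ ^ 2) (Δt / κ) * Mg ^ 2 := by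
  set lam := min (κ * Δt / (4 * C_PF ^ 2)) 1 with hlam_def
  have hlam_pos : 0 < lam := by
    apply lt_min
    · positivity
    · norm_num
  have hlam_le1 : lam ≤ 1 := min_le_right _ _
  have hlam_le2 : lam ≤ κ * Δt / (4 * C_PF ^ 2) := min_le_left _ _
  have hMτ : 0 ≤ Mτ := le_trans (norm_nonneg _) (hτ 0)
  set C : ℝ := μ * Δt * Mτ ^ 2 + Δt * Mg ^ 2 / κ with hC_def
  have hC : 0 ≤ C := by positivity
  set e : ℕ → ℝ := fun n => ‖θ n‖ ^ 2 + κ * Δt / 4 * ‖D (θ n)‖ ^ 2 with he_def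
  have hstep : ∀ n, (1 + lam) * e (n + 1) ≤ e n + C := by
    intro n
    have hs := hscheme n (θ (n + 1))
    simp only [hb n, inner_sub_left, map_sub, real_inner_self_eq_norm_sq, add_zero] at hs
    have hip1 : ⟪θ n, θ (n + 1)⟫ ≤ (‖θ (n + 1)‖ ^ 2 + ‖θ n‖ ^ 2) / 2 := by
      have := real_inner_le_norm (θ n) (θ (n + 1))
      nlinarith [sq_nonneg (‖θ (n + 1)‖ - ‖θ n‖)]
    have hip2 : ⟪I (τ (n + 1)), I (θ (n + 1) : H)⟫
        ≤ Mτ ^ 2 / 2 + ‖I (θ (n + 1) : H)‖ ^ 2 / 2 := by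
      have h1 := real_inner_le_norm (I (τ (n + 1))) (I (θ (n + 1) : H))
      have h2 : ‖I (τ (n + 1))‖ ≤ Mτ := le_trans (hI _) (hτ _)
      nlinarith [norm_nonneg (I (τ (n + 1))), norm_nonneg (I (θ (n + 1) : H)),
        sq_nonneg (Mτ - ‖I (θ (n + 1) : H)‖)]
    have hgv : (g (n + 1)) (θ (n + 1)) ≤ κ * ‖D (θ (n + 1))‖ ^ 2 / 2 + Mg ^ 2 / (2 * κ) := by
      have h1 : (g (n + 1)) (θ (n + 1)) ≤ Mg * ‖D (θ (n + 1))‖ :=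
        le_trans (le_abs_self _) (hg _ _)
      have h2 : Mg * ‖D (θ (n + 1))‖ ≤ κ * ‖D (θ (n + 1))‖ ^ 2 / 2 + Mg ^ 2 / (2 * κ) := by
        rw [div_add_div _ _ (by norm_num : (2:ℝ) ≠ 0) (by positivity : 2 * κ ≠ 0),
          le_div_iff₀ (by positivity : (0:ℝ) < 2 * (2 * κ))]
        nlinarith [sq_nonneg (κ * ‖D (θ (n + 1))‖ - Mg)]
      linarith
    have hA2 : ‖θ (n + 1)‖ ^ 2 ≤ C_PF ^ 2 * ‖D (θ (n + 1))‖ ^ 2 := by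
      have h1 := hPF (θ (n + 1))
      rw [Submodule.norm_coe] at h1
      nlinarith [norm_nonneg (θ (n + 1)), norm_nonneg (D (θ (n + 1)))]
    have hmain := step_arith lam Δt κ μ C_PF Mτ Mg (‖θ (n + 1)‖) (‖θ n‖)
      (‖D (θ (n + 1))‖) (‖D (θ n)‖) (‖I (θ (n + 1) : H)‖)
      (⟪θ n, θ (n + 1)⟫) (⟪I (τ (n + 1)), I (θ (n + 1) : H)⟫)
      ((g (n + 1)) (θ (n + 1)))
      hΔt hκ hμ hC_PF hlam_pos hlam_le1 hlam_le2 hs hip1 hip2 hgv hA2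
      (norm_nonneg (D (θ n)))
    simpa only [he_def, hC_def] using hmain
  intro n
  have key := geom_decay_aux lam C hlam_pos hC e hstep (n + 1)
  have hCdiv : C / lam ≤ max (4 * μ * C_PF ^ 2 / κ) (μ * Δt) * Mτ ^ 2
      + max (4 * C_PF ^ 2 / κ ^ 2) (Δt / κ) * Mg ^ 2 := by
    have hsplit : C / lam = μ * Δt * Mτ ^ 2 / lam + Δt * Mg ^ 2 / κ / lam := by
      rw [hC_def, add_div]
    have h1 : μ * Δt * Mτ ^ 2 / lam ≤ max (4 * μ * C_PF ^ 2 / κ) (μ * Δt) * Mτ ^ 2 := by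
      rcases le_or_gt (κ * Δt / (4 * C_PF ^ 2)) 1 with h | h
      · have hmin : lam = κ * Δt / (4 * C_PF ^ 2) := min_eq_left h
        have heq2 : μ * Δt * Mτ ^ 2 / (κ * Δt / (4 * C_PF ^ 2))
            = 4 * μ * C_PF ^ 2 / κ * Mτ ^ 2 := by
          field_simp
        rw [hmin, heq2]
        exact mul_le_mul_of_nonneg_right (le_max_left _ _) (by positivity)
      · have hmin : lam = 1 := min_eq_right h.le
        rw [hmin, div_one]
        calc μ * Δt * Mτ ^ 2 = μ * Δt * Mτ ^ 2 := rfl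
          _ ≤ max (4 * μ * C_PF ^ 2 / κ) (μ * Δt) * Mτ ^ 2 :=
            mul_le_mul_of_nonneg_right (le_max_right _ _) (by positivity)
    have h2 : Δt * Mg ^ 2 / κ / lam ≤ max (4 * C_PF ^ 2 / κ ^ 2) (Δt / κ) * Mg ^ 2 := by
      rcases le_or_gt (κ * Δt / (4 * C_PF ^ 2)) 1 with h | h
      · have hmin : lam = κ * Δt / (4 * C_PF ^ 2) := min_eq_left h
        have heq2 : Δt * Mg ^ 2 / κ / (κ * Δt / (4 * C_PF ^ 2))
            = 4 * C_PF ^ 2 / κ ^ 2 * Mg ^ 2 := by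
          field_simp
        rw [hmin, heq2]
        exact mul_le_mul_of_nonneg_right (le_max_left _ _) (sq_nonneg _)
      · have hmin : lam = 1 := min_eq_right h.le
        rw [hmin, div_one]
        have : Δt * Mg ^ 2 / κ = Δt / κ * Mg ^ 2 := by ring
        rw [this]
        exact mul_le_mul_of_nonneg_right (le_max_right _ _) (sq_nonneg _)
    rw [hsplit]
    linarith
  have he1 : e (n + 1) = ‖θ (n + 1)‖ ^ 2 + κ * Δt / 4 * ‖D (θ (n + 1))‖ ^ 2 := rfl
  have he0 : e 0 = ‖θ 0‖ ^ 2 + κ * Δt / 4 * ‖D (θ 0)‖ ^ 2 := rfl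
  rw [he1, he0] at key
  linarith
end

section
/- In the abstract framework for the nudged implicit Euler scheme for the velocity of the Darcy–Brinkman system, for every n ≥ 0 the solution satisfies the one-step stability estimate ‖u_{n+1}‖² + νΔt ‖Du_{n+1}‖² + Da^{-1}Δt ‖u_{n+1}‖² ≤ ‖u_n‖² + DaΔt (β_T² Θ + β_c² Σ) g_∞² + ν^{-1}Δt M_F² + μ₁Δt M_u². -/
open scoped RealInnerProductSpace

set_option maxHeartbeats 1000000

/-- One-step stability estimate for the nudged implicit Euler scheme for the velocity of
the Darcy–Brinkman system:
`‖u_{n+1}‖² + νΔt‖Du_{n+1}‖² + Da⁻¹Δt‖u_{n+1}‖²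
  ≤ ‖u_n‖² + DaΔt(β_T²Θ + β_c²Σ)g_∞² + ν⁻¹Δt M_F² + μ₁Δt M_u²`. -/
theorem nudged_velocity_one_step_stability
    {H F : Type*} [NormedAddCommGroup H] [InnerProductSpace ℝ H]
    [NormedAddCommGroup F] [InnerProductSpace ℝ F]
    (V : Submodule ℝ H) (D : V →ₗ[ℝ] F)
    (C_PF : ℝ) (hC_PF : 0 < C_PF)
    (hPF : ∀ v : V, ‖(v : H)‖ ≤ C_PF * ‖D v‖)
    (I : H →ₗ[ℝ] H) (hI : ∀ φ : H, ‖I φ‖ ≤ ‖φ‖)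
    (Δt ν Da μ₁ βT βc gInf : ℝ)
    (hΔt : 0 < Δt) (hν : 0 < ν) (hDa : 0 < Da) (hμ₁ : 0 < μ₁)
    (hβT : 0 ≤ βT) (hβc : 0 ≤ βc) (hgInf : 0 ≤ gInf)
    (b : ℕ → V →ₗ[ℝ] V →ₗ[ℝ] ℝ) (hb : ∀ n (v : V), b n v v = 0)
    (w : ℕ → H) (Mu : ℝ) (hw : ∀ n, ‖w n‖ ≤ Mu)
    (f : ℕ → V →ₗ[ℝ] ℝ) (MF : ℝ) (hf : ∀ n (v : V), |f n v| ≤ MF * ‖D v‖)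
    (Θ Sig : ℝ) (hΘ : 0 ≤ Θ) (hSig : 0 ≤ Sig)
    (r : ℕ → V →ₗ[ℝ] ℝ) (c : ℕ → ℝ) (hc : ∀ n, 0 ≤ c n)
    (hr : ∀ n (v : V), |r n v| ≤ c n * ‖v‖)
    (hcbound : ∀ n, (c n) ^ 2 ≤ (βT ^ 2 * Θ + βc ^ 2 * Sig) * gInf ^ 2)
    (u : ℕ → V)
    (hscheme : ∀ n (v : V),
      (1 / Δt) * ⟪u (n + 1) - u n, v⟫ + b n (u (n + 1)) v
        + ν * ⟪D (u (n + 1)), D v⟫ + Da⁻¹ * ⟪u (n + 1), v⟫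
        + μ₁ * ⟪I ((u (n + 1) : H) - w (n + 1)), I (v : H)⟫
        = r n v + f (n + 1) v) :
    ∀ n, ‖u (n + 1)‖ ^ 2 + ν * Δt * ‖D (u (n + 1))‖ ^ 2 + Da⁻¹ * Δt * ‖u (n + 1)‖ ^ 2
      ≤ ‖u n‖ ^ 2 + Da * Δt * ((βT ^ 2 * Θ + βc ^ 2 * Sig) * gInf ^ 2)
          + ν⁻¹ * Δt * MF ^ 2 + μ₁ * Δt * Mu ^ 2 := by

  intro n
  have hMu : 0 ≤ Mu := le_trans (norm_nonneg _) (hw 0)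
  set U : V := u (n + 1) with hUdef
  have E := hscheme n U
  rw [hb] at E
  set A : ℝ := ‖U‖ ^ 2 with hA
  set G : ℝ := ‖D U‖ ^ 2 with hG
  set N : ℝ := ⟪I ((U : H) - w (n + 1)), I (U : H)⟫ with hN
  have hUU : ⟪U, U⟫ = A := real_inner_self_eq_norm_sq U
  have hDD : ⟪D U, D U⟫ = G := real_inner_self_eq_norm_sq (D U)
  -- clear the 1/Δt factor
  have E2 : ⟪U - u n, U⟫ + Δt * ν * G + Δt * Da⁻¹ * A + Δt * μ₁ * N
      = Δt * (r n U) + Δt * (f (n + 1) U) := by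
    rw [hUU, hDD] at E
    have hone : Δt * (1 / Δt) = 1 := mul_one_div_cancel hΔt.ne'
    linear_combination Δt * E - (⟪U - u n, U⟫ : ℝ) * hone
  -- first term lower bound
  have h1 : (A - ‖u n‖ ^ 2) / 2 ≤ ⟪U - u n, U⟫ := by
    rw [inner_sub_left, hUU]
    have h2 : ⟪u n, U⟫ ≤ ‖u n‖ * ‖U‖ := real_inner_le_norm _ _
    nlinarith [sq_nonneg (‖u n‖ - ‖U‖)]
  -- nudging term lower bound
  have hNlb : -(Mu ^ 2 / 2) ≤ N := by
    rw [hN, map_sub, inner_sub_left]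
    have h2 : ⟪I (w (n + 1)), I (U : H)⟫ ≤ ‖I (w (n + 1))‖ * ‖I (U : H)‖ :=
      real_inner_le_norm _ _
    have h3 : ‖I (w (n + 1))‖ ≤ Mu := le_trans (hI _) (hw _)
    have h4 : (0 : ℝ) ≤ ‖I (U : H)‖ := norm_nonneg _
    have h5 : ⟪I (U : H), I (U : H)⟫ = ‖I (U : H)‖ ^ 2 :=
      real_inner_self_eq_norm_sq _
    nlinarith [sq_nonneg (‖I (U : H)‖ - Mu / 2)]
  have mN : Δt * μ₁ * (-(Mu ^ 2 / 2)) ≤ Δt * μ₁ * N :=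
    mul_le_mul_of_nonneg_left hNlb (by positivity)
  -- buoyancy term
  have hR : r n U ≤ (Da * (c n) ^ 2 + Da⁻¹ * A) / 2 := by
    have h2 : r n U ≤ c n * ‖U‖ := (abs_le.mp (hr n U)).2
    have h3 : Da⁻¹ * Da = 1 := inv_mul_cancel₀ hDa.ne'
    nlinarith [sq_nonneg (Da * c n - ‖U‖), inv_pos.mpr hDa]
  have mR : Δt * (r n U) ≤ Δt * ((Da * (c n) ^ 2 + Da⁻¹ * A) / 2) :=
    mul_le_mul_of_nonneg_left hR hΔt.le
  -- forcing term
  have hF : f (n + 1) U ≤ (ν⁻¹ * MF ^ 2 + ν * G) / 2 := by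
    have h2 : f (n + 1) U ≤ MF * ‖D U‖ := (abs_le.mp (hf (n + 1) U)).2
    have e1 : ν⁻¹ * (ν * ‖D U‖ - MF) ^ 2
        = ν * ‖D U‖ ^ 2 - 2 * MF * ‖D U‖ + ν⁻¹ * MF ^ 2 := by
      field_simp
      ring
    have e2 : 0 ≤ ν⁻¹ * (ν * ‖D U‖ - MF) ^ 2 :=
      mul_nonneg (inv_pos.mpr hν).le (sq_nonneg _)
    rw [hG]
    linarith [e1, e2]
  have mF : Δt * (f (n + 1) U) ≤ Δt * ((ν⁻¹ * MF ^ 2 + ν * G) / 2) :=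
    mul_le_mul_of_nonneg_left hF hΔt.le
  -- buoyancy bound
  have mc : Δt * Da * (c n) ^ 2 ≤ Δt * Da * ((βT ^ 2 * Θ + βc ^ 2 * Sig) * gInf ^ 2) :=
    mul_le_mul_of_nonneg_left (hcbound n) (by positivity)
  linarith
end

section
/- In the abstract framework for the nudged implicit Euler scheme for the velocity of the Darcy–Brinkman system, set λ_u := min{νΔt/(4C_PF²) + Da^{-1}Δt/4, 1}. Then for every n ≥ 0 the solution satisfies the contraction recursion (1 + λ_u)(‖u_{n+1}‖² + (νΔt/4)‖Du_{n+1}‖² + (Da^{-1}Δt/4)‖u_{n+1}‖²) ≤ ‖u_n‖² + (νΔt/4)‖Du_n‖² + (Da^{-1}Δt/4)‖u_n‖² + DaΔt (β_T² Θ + β_c² Σ) g_∞² + ν^{-1}Δt M_F² + μ₁Δt M_u². -/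
open scoped RealInnerProductSpace
set_option maxHeartbeats 2000000

private lemma young_aux (x y ε : ℝ) (hε : 0 < ε) :
    x * y ≤ (ε * x ^ 2 + ε⁻¹ * y ^ 2) / 2 := by
  have h : ε⁻¹ * (ε * x - y) ^ 2 = ε * x ^ 2 - 2 * (x * y) + ε⁻¹ * y ^ 2 := by
    field_simp
    ring
  have h2 : 0 ≤ ε⁻¹ * (ε * x - y) ^ 2 := by positivity
  linarith

/-- Contraction recursion for the nudged implicit Euler scheme for the velocity of the
Darcy–Brinkman system: with `λ_u = min{νΔt/(4C_PF²) + Da⁻¹Δt/4, 1}`,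
`(1 + λ_u)(‖u_{n+1}‖² + (νΔt/4)‖Du_{n+1}‖² + (Da⁻¹Δt/4)‖u_{n+1}‖²)
  ≤ ‖u_n‖² + (νΔt/4)‖Du_n‖² + (Da⁻¹Δt/4)‖u_n‖²
    + DaΔt(β_T²Θ + β_c²Σ)g_∞² + ν⁻¹Δt M_F² + μ₁Δt M_u²`. -/
theorem nudged_velocity_contraction_recursion
    {H F : Type*} [NormedAddCommGroup H] [InnerProductSpace ℝ H]
    [NormedAddCommGroup F] [InnerProductSpace ℝ F]
    (V : Submodule ℝ H) (D : V →ₗ[ℝ] F)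
    (C_PF : ℝ) (hC_PF : 0 < C_PF)
    (hPF : ∀ v : V, ‖(v : H)‖ ≤ C_PF * ‖D v‖)
    (I : H →ₗ[ℝ] H) (hI : ∀ φ : H, ‖I φ‖ ≤ ‖φ‖)
    (Δt ν Da μ₁ βT βc gInf : ℝ)
    (hΔt : 0 < Δt) (hν : 0 < ν) (hDa : 0 < Da) (hμ₁ : 0 < μ₁)
    (hβT : 0 ≤ βT) (hβc : 0 ≤ βc) (hgInf : 0 ≤ gInf)
    (b : ℕ → V →ₗ[ℝ] V →ₗ[ℝ] ℝ) (hb : ∀ n (v : V), b n v v = 0)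
    (w : ℕ → H) (Mu : ℝ) (hw : ∀ n, ‖w n‖ ≤ Mu)
    (f : ℕ → V →ₗ[ℝ] ℝ) (MF : ℝ) (hf : ∀ n (v : V), |f n v| ≤ MF * ‖D v‖)
    (Θ Sig : ℝ) (hΘ : 0 ≤ Θ) (hSig : 0 ≤ Sig)
    (r : ℕ → V →ₗ[ℝ] ℝ) (c : ℕ → ℝ) (hc : ∀ n, 0 ≤ c n)
    (hr : ∀ n (v : V), |r n v| ≤ c n * ‖v‖)
    (hcbound : ∀ n, (c n) ^ 2 ≤ (βT ^ 2 * Θ + βc ^ 2 * Sig) * gInf ^ 2)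
    (u : ℕ → V)
    (hscheme : ∀ n (v : V),
      (1 / Δt) * ⟪u (n + 1) - u n, v⟫ + b n (u (n + 1)) v
        + ν * ⟪D (u (n + 1)), D v⟫ + Da⁻¹ * ⟪u (n + 1), v⟫
        + μ₁ * ⟪I ((u (n + 1) : H) - w (n + 1)), I (v : H)⟫
        = r n v + f (n + 1) v) :
    ∀ n, (1 + min (ν * Δt / (4 * C_PF ^ 2) + Da⁻¹ * Δt / 4) 1)
          * (‖u (n + 1)‖ ^ 2 + ν * Δt / 4 * ‖D (u (n + 1))‖ ^ 2
              + Da⁻¹ * Δt / 4 * ‖u (n + 1)‖ ^ 2)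
      ≤ ‖u n‖ ^ 2 + ν * Δt / 4 * ‖D (u n)‖ ^ 2 + Da⁻¹ * Δt / 4 * ‖u n‖ ^ 2
          + Da * Δt * ((βT ^ 2 * Θ + βc ^ 2 * Sig) * gInf ^ 2)
          + ν⁻¹ * Δt * MF ^ 2 + μ₁ * Δt * Mu ^ 2 := by
  intro n
  have hMu : 0 ≤ Mu := le_trans (norm_nonneg _) (hw 0)
  have E := hscheme n (u (n + 1))
  rw [hb n (u (n + 1)), real_inner_self_eq_norm_sq, real_inner_self_eq_norm_sq,
    map_sub] at E
  set a := u (n + 1) with ha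
  -- time-difference term
  have e1 : ⟪a - u n, a⟫ = ‖a‖ ^ 2 - ⟪u n, a⟫ := by
    rw [inner_sub_left, real_inner_self_eq_norm_sq]
  have cs1 : ⟪u n, a⟫ ≤ ‖u n‖ * ‖a‖ := real_inner_le_norm _ _
  have h1 : (‖a‖ ^ 2 - ‖u n‖ ^ 2) / 2 ≤ ⟪a - u n, a⟫ := by
    nlinarith [sq_nonneg (‖u n‖ - ‖a‖)]
  -- nudging term
  have e2 : ⟪I (↑a) - I (w (n + 1)), I (↑a)⟫
      = ‖I (↑a)‖ ^ 2 - ⟪I (w (n + 1)), I (↑a)⟫ := by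
    rw [inner_sub_left, real_inner_self_eq_norm_sq]
  have hyMu : ‖I (w (n + 1))‖ ≤ Mu := le_trans (hI _) (hw _)
  have hy2 : ‖I (w (n + 1))‖ ^ 2 ≤ Mu ^ 2 := by
    nlinarith [norm_nonneg (I (w (n + 1)))]
  have cs2 : ⟪I (w (n + 1)), I (↑a)⟫ ≤ ‖I (w (n + 1))‖ * ‖I (↑a)‖ :=
    real_inner_le_norm _ _
  have h2 : -(Mu ^ 2 / 2) ≤ ⟪I (↑a) - I (w (n + 1)), I (↑a)⟫ := by
    rw [e2]
    nlinarith [sq_nonneg (2 * ‖I (↑a : H)‖ - ‖I (w (n + 1))‖)]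
  -- buoyancy term
  have h3 : r n a ≤ (Da * (c n) ^ 2 + Da⁻¹ * ‖a‖ ^ 2) / 2 :=
    le_trans (le_of_abs_le (hr n a)) (young_aux (c n) ‖a‖ Da hDa)
  -- forcing term
  have h4 : f (n + 1) a ≤ (ν⁻¹ * MF ^ 2 + ν * ‖D a‖ ^ 2) / 2 := by
    have h := young_aux MF ‖D a‖ ν⁻¹ (inv_pos.mpr hν)
    rw [inv_inv] at h
    exact le_trans (le_of_abs_le (hf (n + 1) a)) h
  -- multiply bounds by Δt (and μ₁ Δt)
  have h1' : Δt * ((‖a‖ ^ 2 - ‖u n‖ ^ 2) / 2) ≤ Δt * ⟪a - u n, a⟫ :=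
    mul_le_mul_of_nonneg_left h1 hΔt.le
  have h2' : (μ₁ * Δt) * (-(Mu ^ 2 / 2))
      ≤ (μ₁ * Δt) * ⟪I (↑a) - I (w (n + 1)), I (↑a)⟫ :=
    mul_le_mul_of_nonneg_left h2 (by positivity)
  have h3' : Δt * r n a ≤ Δt * ((Da * (c n) ^ 2 + Da⁻¹ * ‖a‖ ^ 2) / 2) :=
    mul_le_mul_of_nonneg_left h3 hΔt.le
  have h4' : Δt * f (n + 1) a ≤ Δt * ((ν⁻¹ * MF ^ 2 + ν * ‖D a‖ ^ 2) / 2) :=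
    mul_le_mul_of_nonneg_left h4 hΔt.le
  have hΔt0 : Δt ≠ 0 := hΔt.ne'
  have E1 : 1 / Δt * ⟪a - u n, a⟫
      = r n a + f (n + 1) a - ν * ‖D a‖ ^ 2 - Da⁻¹ * ‖a‖ ^ 2
        - μ₁ * ⟪I (↑a) - I (w (n + 1)), I (↑a)⟫ := by linarith [E]
  have E2 : ⟪a - u n, a⟫
      = Δt * (r n a + f (n + 1) a - ν * ‖D a‖ ^ 2 - Da⁻¹ * ‖a‖ ^ 2
        - μ₁ * ⟪I (↑a) - I (w (n + 1)), I (↑a)⟫) := by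
    rw [← E1]
    field_simp
  -- key energy inequality
  have K : ‖a‖ ^ 2 + Δt * (ν * ‖D a‖ ^ 2) + Δt * (Da⁻¹ * ‖a‖ ^ 2)
      ≤ ‖u n‖ ^ 2 + Δt * (Da * (c n) ^ 2) + Δt * (ν⁻¹ * MF ^ 2)
        + Δt * (μ₁ * Mu ^ 2) := by
    linarith [E2, h1', h2', h3', h4']
  have hcS : Δt * (Da * (c n) ^ 2)
      ≤ Da * Δt * ((βT ^ 2 * Θ + βc ^ 2 * Sig) * gInf ^ 2) := by
    have h := mul_le_mul_of_nonneg_left (hcbound n)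
      (show (0:ℝ) ≤ Da * Δt by positivity)
    linarith [h]
  -- bounds on λ_u
  set L := min (ν * Δt / (4 * C_PF ^ 2) + Da⁻¹ * Δt / 4) 1 with hL
  have hL0 : 0 ≤ L := le_min (by positivity) zero_le_one
  have hLa : L ≤ ν * Δt / (4 * C_PF ^ 2) + Da⁻¹ * Δt / 4 := min_le_left _ _
  have hLb : L ≤ 1 := min_le_right _ _
  have hcoe : ‖(a : H)‖ = ‖a‖ := rfl
  have hA1 : ‖a‖ ^ 2 ≤ C_PF ^ 2 * ‖D a‖ ^ 2 := by
    have hp := hPF a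
    rw [hcoe] at hp
    nlinarith [norm_nonneg (a : H), hC_PF]
  have A0 : (0:ℝ) ≤ ‖a‖ ^ 2 := sq_nonneg _
  have B0 : (0:ℝ) ≤ ‖D a‖ ^ 2 := sq_nonneg _
  have key : ν * Δt / (4 * C_PF ^ 2) * ‖a‖ ^ 2 ≤ ν * Δt / 4 * ‖D a‖ ^ 2 := by
    calc ν * Δt / (4 * C_PF ^ 2) * ‖a‖ ^ 2
        ≤ ν * Δt / (4 * C_PF ^ 2) * (C_PF ^ 2 * ‖D a‖ ^ 2) :=
          mul_le_mul_of_nonneg_left hA1 (by positivity)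
      _ = ν * Δt / 4 * ‖D a‖ ^ 2 := by
          field_simp
  have hL1 : L * ‖a‖ ^ 2 ≤ ν * Δt / 4 * ‖D a‖ ^ 2 + Da⁻¹ * Δt / 4 * ‖a‖ ^ 2 := by
    have h := mul_le_mul_of_nonneg_right hLa A0
    nlinarith [key]
  have hL2 : L * (ν * Δt / 4 * ‖D a‖ ^ 2) ≤ ν * Δt / 4 * ‖D a‖ ^ 2 := by
    have h := mul_le_mul_of_nonneg_right hLb
      (mul_nonneg (by positivity : (0:ℝ) ≤ ν * Δt / 4) B0)
    linarith
  have hL3 : L * (Da⁻¹ * Δt / 4 * ‖a‖ ^ 2) ≤ Da⁻¹ * Δt / 4 * ‖a‖ ^ 2 := by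
    have h := mul_le_mul_of_nonneg_right hLb
      (mul_nonneg (by positivity : (0:ℝ) ≤ Da⁻¹ * Δt / 4) A0)
    linarith
  have slack1 : (0:ℝ) ≤ Δt * (ν * ‖D a‖ ^ 2) := by positivity
  have slack2 : (0:ℝ) ≤ Δt * (Da⁻¹ * ‖a‖ ^ 2) := by positivity
  have slack3 : (0:ℝ) ≤ ν * Δt / 4 * ‖D (u n)‖ ^ 2 := by positivity
  have slack4 : (0:ℝ) ≤ Da⁻¹ * Δt / 4 * ‖u n‖ ^ 2 := by positivity
  linarith [K, hcS, hL1, hL2, hL3, slack1, slack2, slack3, slack4]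
end

section
/- In the abstract framework for the nudged implicit Euler scheme for the velocity of the Darcy–Brinkman system, set λ_u := min{νΔt/(4C_PF²) + Da^{-1}Δt/4, 1}. Then the solution is stable at all time levels without any time-step restriction: for every n ≥ 0, ‖u_{n+1}‖² + (νΔt/4)‖Du_{n+1}‖² + (Da^{-1}Δt/4)‖u_{n+1}‖² ≤ (1 + λ_u)^{-(n+1)} (‖u_0‖² + (νΔt/4)‖Du_0‖² + (Da^{-1}Δt/4)‖u_0‖²) + max{4C_PF²Da/(ν + C_PF²Da^{-1}), DaΔt} (β_T² Θ + β_c² Σ) g_∞² + max{4C_PF²ν^{-1}/(ν + C_PF²Da^{-1}), ν^{-1}Δt} M_F² + max{4C_PF²μ₁/(ν + C_PF²Da^{-1}), μ₁Δt} M_u². -/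
open scoped RealInnerProductSpace

set_option maxHeartbeats 1000000

/-- Long-time stability of the nudged implicit Euler scheme for the velocity of the
Darcy–Brinkman system, without any time-step restriction: with
`λ_u = min{νΔt/(4C_PF²) + Da⁻¹Δt/4, 1}`,
`‖u_{n+1}‖² + (νΔt/4)‖Du_{n+1}‖² + (Da⁻¹Δt/4)‖u_{n+1}‖²
  ≤ (1 + λ_u)^{-(n+1)}(‖u_0‖² + (νΔt/4)‖Du_0‖² + (Da⁻¹Δt/4)‖u_0‖²)
    + max{4C_PF²Da/(ν + C_PF²Da⁻¹), DaΔt}(β_T²Θ + β_c²Σ)g_∞²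
    + max{4C_PF²ν⁻¹/(ν + C_PF²Da⁻¹), ν⁻¹Δt} M_F²
    + max{4C_PF²μ₁/(ν + C_PF²Da⁻¹), μ₁Δt} M_u²`. -/
theorem nudged_velocity_long_time_stability
    {H F : Type*} [NormedAddCommGroup H] [InnerProductSpace ℝ H]
    [NormedAddCommGroup F] [InnerProductSpace ℝ F]
    (V : Submodule ℝ H) (D : V →ₗ[ℝ] F)
    (C_PF : ℝ) (hC_PF : 0 < C_PF)
    (hPF : ∀ v : V, ‖(v : H)‖ ≤ C_PF * ‖D v‖)
    (I : H →ₗ[ℝ] H) (hI : ∀ φ : H, ‖I φ‖ ≤ ‖φ‖)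
    (Δt ν Da μ₁ βT βc gInf : ℝ)
    (hΔt : 0 < Δt) (hν : 0 < ν) (hDa : 0 < Da) (hμ₁ : 0 < μ₁)
    (hβT : 0 ≤ βT) (hβc : 0 ≤ βc) (hgInf : 0 ≤ gInf)
    (b : ℕ → V →ₗ[ℝ] V →ₗ[ℝ] ℝ) (hb : ∀ n (v : V), b n v v = 0)
    (w : ℕ → H) (Mu : ℝ) (hw : ∀ n, ‖w n‖ ≤ Mu)
    (f : ℕ → V →ₗ[ℝ] ℝ) (MF : ℝ) (hf : ∀ n (v : V), |f n v| ≤ MF * ‖D v‖)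
    (Θ Sig : ℝ) (hΘ : 0 ≤ Θ) (hSig : 0 ≤ Sig)
    (r : ℕ → V →ₗ[ℝ] ℝ) (c : ℕ → ℝ) (hc : ∀ n, 0 ≤ c n)
    (hr : ∀ n (v : V), |r n v| ≤ c n * ‖v‖)
    (hcbound : ∀ n, (c n) ^ 2 ≤ (βT ^ 2 * Θ + βc ^ 2 * Sig) * gInf ^ 2)
    (u : ℕ → V)
    (hscheme : ∀ n (v : V),
      (1 / Δt) * ⟪u (n + 1) - u n, v⟫ + b n (u (n + 1)) v
        + ν * ⟪D (u (n + 1)), D v⟫ + Da⁻¹ * ⟪u (n + 1), v⟫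
        + μ₁ * ⟪I ((u (n + 1) : H) - w (n + 1)), I (v : H)⟫
        = r n v + f (n + 1) v) :
    ∀ n, ‖u (n + 1)‖ ^ 2 + ν * Δt / 4 * ‖D (u (n + 1))‖ ^ 2
          + Da⁻¹ * Δt / 4 * ‖u (n + 1)‖ ^ 2
      ≤ ((1 + min (ν * Δt / (4 * C_PF ^ 2) + Da⁻¹ * Δt / 4) 1) ^ (n + 1))⁻¹
            * (‖u 0‖ ^ 2 + ν * Δt / 4 * ‖D (u 0)‖ ^ 2 + Da⁻¹ * Δt / 4 * ‖u 0‖ ^ 2)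
        + max (4 * C_PF ^ 2 * Da / (ν + C_PF ^ 2 * Da⁻¹)) (Da * Δt)
            * ((βT ^ 2 * Θ + βc ^ 2 * Sig) * gInf ^ 2)
        + max (4 * C_PF ^ 2 * ν⁻¹ / (ν + C_PF ^ 2 * Da⁻¹)) (ν⁻¹ * Δt) * MF ^ 2
        + max (4 * C_PF ^ 2 * μ₁ / (ν + C_PF ^ 2 * Da⁻¹)) (μ₁ * Δt) * Mu ^ 2 := by
  intro n
  set lam : ℝ := min (ν * Δt / (4 * C_PF ^ 2) + Da⁻¹ * Δt / 4) 1 with hlam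
  set C2 : ℝ := (βT ^ 2 * Θ + βc ^ 2 * Sig) * gInf ^ 2 with hC2def
  have hC20 : 0 ≤ C2 := by rw [hC2def]; positivity
  set R : ℝ := Δt * (Da * C2 + ν⁻¹ * MF ^ 2 + μ₁ / 2 * Mu ^ 2) with hRdef
  have hMu0 : 0 ≤ Mu := le_trans (norm_nonneg _) (hw 0)
  have hR0 : 0 ≤ R := by rw [hRdef]; positivity
  have hlampos : 0 < lam := lt_min (by positivity) one_pos
  have hl1 : lam ≤ 1 := min_le_right _ _
  have hl2 : lam ≤ ν * Δt / (4 * C_PF ^ 2) + Da⁻¹ * Δt / 4 := min_le_left _ _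
  set E : ℕ → ℝ := fun k =>
    ‖u k‖ ^ 2 + ν * Δt / 4 * ‖D (u k)‖ ^ 2 + Da⁻¹ * Δt / 4 * ‖u k‖ ^ 2 with hE
  clear_value lam C2 R E
  -- per-step energy inequality
  have key : ∀ k : ℕ, (1 + lam) * E (k + 1) ≤ E k + R := by
    intro k
    have hs := hscheme k (u (k + 1))
    rw [hb, real_inner_self_eq_norm_sq, real_inner_self_eq_norm_sq] at hs
    set a : ℝ := ‖u (k + 1)‖ with ha
    set bb : ℝ := ‖u k‖ with hbb
    set d : ℝ := ‖D (u (k + 1))‖ with hd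
    set N : ℝ := ⟪I ((u (k + 1) : H) - w (k + 1)), I ((u (k + 1) : V) : H)⟫ with hN
    clear_value a bb d N
    -- first-difference term
    have hX : (a ^ 2 - bb ^ 2) / 2 ≤ ⟪u (k + 1) - u k, u (k + 1)⟫ := by
      have h1 : ⟪u (k + 1) - u k, u (k + 1)⟫ = ⟪u (k + 1), u (k + 1)⟫ - ⟪u k, u (k + 1)⟫ :=
        inner_sub_left _ _ _
      have h2 : ⟪u k, u (k + 1)⟫ ≤ bb * a := by
        rw [hbb, ha]; exact real_inner_le_norm _ _
      have h3 : ⟪u (k + 1), u (k + 1)⟫ = a ^ 2 := by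
        rw [ha]; exact real_inner_self_eq_norm_sq _
      nlinarith [sq_nonneg (a - bb)]
    -- nudging term
    have hNlow : ‖I ((u (k + 1) : V) : H)‖ ^ 2 - Mu * ‖I ((u (k + 1) : V) : H)‖ ≤ N := by
      rw [hN, map_sub, inner_sub_left, real_inner_self_eq_norm_sq]
      have h2 : ⟪I (w (k + 1)), I ((u (k + 1) : V) : H)⟫ ≤ Mu * ‖I ((u (k + 1) : V) : H)‖ :=
        le_trans (real_inner_le_norm _ _)
          (mul_le_mul_of_nonneg_right (le_trans (hI _) (hw _)) (norm_nonneg _))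
      linarith
    have hNfinal : -(μ₁ * Mu ^ 2 / 4) ≤ μ₁ * N := by
      have h1 := mul_le_mul_of_nonneg_left hNlow hμ₁.le
      nlinarith [mul_nonneg hμ₁.le (sq_nonneg (2 * ‖I ((u (k + 1) : V) : H)‖ - Mu))]
    -- buoyancy term
    have hrb : r k (u (k + 1)) ≤ Da⁻¹ / 2 * a ^ 2 + Da / 2 * C2 := by
      have h1 : r k (u (k + 1)) ≤ c k * a := by
        rw [ha]; exact le_trans (le_abs_self _) (hr k _)
      have h3 : c k * a ≤ (a ^ 2 + Da ^ 2 * c k ^ 2) / (2 * Da) := by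
        rw [le_div_iff₀ (by positivity)]
        nlinarith [sq_nonneg (a - Da * c k)]
      have h4 : (a ^ 2 + Da ^ 2 * c k ^ 2) / (2 * Da)
          = Da⁻¹ / 2 * a ^ 2 + Da / 2 * c k ^ 2 := by
        field_simp
      have h5 : Da / 2 * c k ^ 2 ≤ Da / 2 * C2 :=
        mul_le_mul_of_nonneg_left (hcbound k) (by positivity)
      rw [h4] at h3
      linarith
    -- forcing term
    have hfb : f (k + 1) (u (k + 1)) ≤ ν / 2 * d ^ 2 + ν⁻¹ / 2 * MF ^ 2 := by
      have h1 : f (k + 1) (u (k + 1)) ≤ MF * d := by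
        rw [hd]; exact le_trans (le_abs_self _) (hf (k + 1) _)
      have h3 : MF * d ≤ (ν ^ 2 * d ^ 2 + MF ^ 2) / (2 * ν) := by
        rw [le_div_iff₀ (by positivity)]
        nlinarith [sq_nonneg (ν * d - MF)]
      have h4 : (ν ^ 2 * d ^ 2 + MF ^ 2) / (2 * ν) = ν / 2 * d ^ 2 + ν⁻¹ / 2 * MF ^ 2 := by
        field_simp
      rw [h4] at h3
      linarith
    -- Poincaré–Friedrichs
    have hsq : a ^ 2 ≤ C_PF ^ 2 * d ^ 2 := by
      have h1 := hPF (u (k + 1))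
      have h2 : ‖((u (k + 1) : V) : H)‖ = a := ha.symm
      rw [h2, ← hd] at h1
      have ha0 : (0:ℝ) ≤ a := by rw [ha]; exact norm_nonneg _
      nlinarith [mul_self_le_mul_self ha0 h1]
    -- rearranged scheme, multiplied by Δt
    have hq : (1 / Δt) * ⟪u (k + 1) - u k, u (k + 1)⟫
        = r k (u (k + 1)) + f (k + 1) (u (k + 1)) - ν * d ^ 2 - Da⁻¹ * a ^ 2 - μ₁ * N := by
      linarith [hs]
    have hXeq : ⟪u (k + 1) - u k, u (k + 1)⟫
        = Δt * ((1 / Δt) * ⟪u (k + 1) - u k, u (k + 1)⟫) := by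
      field_simp
    rw [hq] at hXeq
    have hsum : r k (u (k + 1)) + f (k + 1) (u (k + 1)) - ν * d ^ 2 - Da⁻¹ * a ^ 2 - μ₁ * N
        ≤ Da⁻¹ / 2 * a ^ 2 + Da / 2 * C2 + ν / 2 * d ^ 2 + ν⁻¹ / 2 * MF ^ 2
          + μ₁ * Mu ^ 2 / 4 - ν * d ^ 2 - Da⁻¹ * a ^ 2 := by
      linarith
    have hstep2 : (a ^ 2 - bb ^ 2) / 2
        ≤ Δt * (Da⁻¹ / 2 * a ^ 2 + Da / 2 * C2 + ν / 2 * d ^ 2 + ν⁻¹ / 2 * MF ^ 2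
          + μ₁ * Mu ^ 2 / 4 - ν * d ^ 2 - Da⁻¹ * a ^ 2) :=
      le_trans (hX.trans_eq hXeq) (mul_le_mul_of_nonneg_left hsum hΔt.le)
    -- combine
    have hB : lam * a ^ 2 ≤ ν * Δt / 4 * d ^ 2 + Da⁻¹ * Δt / 4 * a ^ 2 := by
      have hm : lam * a ^ 2 ≤ (ν * Δt / (4 * C_PF ^ 2) + Da⁻¹ * Δt / 4) * a ^ 2 :=
        mul_le_mul_of_nonneg_right hl2 (sq_nonneg _)
      have he : ν * Δt / (4 * C_PF ^ 2) * (C_PF ^ 2 * d ^ 2) = ν * Δt / 4 * d ^ 2 := by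
        field_simp
      have hm2 : ν * Δt / (4 * C_PF ^ 2) * a ^ 2
          ≤ ν * Δt / (4 * C_PF ^ 2) * (C_PF ^ 2 * d ^ 2) :=
        mul_le_mul_of_nonneg_left hsq (by positivity)
      linarith
    have hC1 : lam * (ν * Δt / 4 * d ^ 2) ≤ ν * Δt / 4 * d ^ 2 := by
      linarith [mul_nonneg (sub_nonneg.mpr hl1) (show (0:ℝ) ≤ ν * Δt / 4 * d ^ 2 by positivity)]
    have hC1' : lam * (Da⁻¹ * Δt / 4 * a ^ 2) ≤ Da⁻¹ * Δt / 4 * a ^ 2 := by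
      linarith [mul_nonneg (sub_nonneg.mpr hl1) (show (0:ℝ) ≤ Da⁻¹ * Δt / 4 * a ^ 2 by positivity)]
    have hEk : bb ^ 2 ≤ E k := by
      have h0 : (0:ℝ) ≤ ν * Δt / 4 * ‖D (u k)‖ ^ 2 + Da⁻¹ * Δt / 4 * ‖u k‖ ^ 2 := by positivity
      simp only [hE, hbb]
      linarith
    have hpos1 : (0:ℝ) ≤ ν * Δt * d ^ 2 := by positivity
    have hpos2 : (0:ℝ) ≤ Da⁻¹ * Δt * a ^ 2 := by positivity
    have hEk1 : E (k + 1) = a ^ 2 + ν * Δt / 4 * d ^ 2 + Da⁻¹ * Δt / 4 * a ^ 2 := by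
      simp only [hE, ha, hd]
    rw [hEk1, hRdef]
    linarith [hstep2, hB, hC1, hC1', hEk, hpos1, hpos2]
  -- iterate the decay
  have decay : ∀ k : ℕ, E k ≤ ((1 + lam) ^ k)⁻¹ * E 0 + R / lam := by
    intro k
    induction k with
    | zero =>
        simp only [pow_zero, inv_one, one_mul]
        have : 0 ≤ R / lam := div_nonneg hR0 hlampos.le
        linarith
    | succ k ih =>
        have h1lam : (0:ℝ) < 1 + lam := by linarith
        have h1 : E (k + 1) ≤ (E k + R) / (1 + lam) := by
          rw [le_div_iff₀ h1lam]
          linarith [key k]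
        have h2 : (E k + R) / (1 + lam)
            ≤ (((1 + lam) ^ k)⁻¹ * E 0 + R / lam + R) / (1 + lam) := by
          exact (div_le_div_iff_of_pos_right h1lam).mpr (by linarith)
        have h3 : (((1 + lam) ^ k)⁻¹ * E 0 + R / lam + R) / (1 + lam)
            = ((1 + lam) ^ (k + 1))⁻¹ * E 0 + R / lam := by
          have hne : (1 + lam) ≠ 0 := h1lam.ne'
          have hpne : ((1 + lam) : ℝ) ^ k ≠ 0 := pow_ne_zero _ hne
          field_simp
          ring
        calc E (k + 1) ≤ (E k + R) / (1 + lam) := h1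
          _ ≤ _ := h2
          _ = _ := h3
  -- coefficient bound
  have hden : (0:ℝ) < ν + C_PF ^ 2 * Da⁻¹ := by positivity
  have coef : ∀ K : ℝ, 0 ≤ K →
      Δt * K / lam ≤ max (4 * C_PF ^ 2 * K / (ν + C_PF ^ 2 * Da⁻¹)) (K * Δt) := by
    intro K hK
    rcases le_total (ν * Δt / (4 * C_PF ^ 2) + Da⁻¹ * Δt / 4) 1 with h | h
    · refine le_max_of_le_left (le_of_eq ?_)
      rw [hlam, min_eq_left h]
      have h2 : (0:ℝ) < ν * Δt / (4 * C_PF ^ 2) + Da⁻¹ * Δt / 4 := by positivity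
      field_simp
    · rw [hlam, min_eq_right h]
      refine le_max_of_le_right (le_of_eq ?_)
      ring
  have hco1 := coef Da hDa.le
  have hco2 := coef ν⁻¹ (by positivity)
  have hco3 : Δt * (μ₁ / 2) / lam
      ≤ max (4 * C_PF ^ 2 * μ₁ / (ν + C_PF ^ 2 * Da⁻¹)) (μ₁ * Δt) := by
    refine le_trans (coef (μ₁ / 2) (by positivity)) (max_le_max ?_ ?_)
    · exact (div_le_div_iff_of_pos_right hden).mpr
        (by linarith [mul_nonneg (sq_nonneg C_PF) hμ₁.le])
    · linarith [mul_nonneg hμ₁.le hΔt.le]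
  have hRlam : R / lam
      ≤ max (4 * C_PF ^ 2 * Da / (ν + C_PF ^ 2 * Da⁻¹)) (Da * Δt) * C2
        + max (4 * C_PF ^ 2 * ν⁻¹ / (ν + C_PF ^ 2 * Da⁻¹)) (ν⁻¹ * Δt) * MF ^ 2
        + max (4 * C_PF ^ 2 * μ₁ / (ν + C_PF ^ 2 * Da⁻¹)) (μ₁ * Δt) * Mu ^ 2 := by
    have e : R / lam = (Δt * Da / lam) * C2 + (Δt * ν⁻¹ / lam) * MF ^ 2
        + (Δt * (μ₁ / 2) / lam) * Mu ^ 2 := by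
      rw [hRdef]
      ring
    rw [e]
    exact add_le_add (add_le_add (mul_le_mul_of_nonneg_right hco1 hC20)
      (mul_le_mul_of_nonneg_right hco2 (sq_nonneg _)))
      (mul_le_mul_of_nonneg_right hco3 (sq_nonneg _))
  have hfin := decay (n + 1)
  have hE0 : E 0 = ‖u 0‖ ^ 2 + ν * Δt / 4 * ‖D (u 0)‖ ^ 2 + Da⁻¹ * Δt / 4 * ‖u 0‖ ^ 2 := by
    rw [hE]
  have hEn : E (n + 1) = ‖u (n + 1)‖ ^ 2 + ν * Δt / 4 * ‖D (u (n + 1))‖ ^ 2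
      + Da⁻¹ * Δt / 4 * ‖u (n + 1)‖ ^ 2 := by
    simp only [hE]
  have hinv0 : 0 ≤ ((1 + lam) ^ (n + 1))⁻¹ * E 0 := by
    have : (0:ℝ) ≤ E 0 := by rw [hE0]; positivity
    have h1lam : (0:ℝ) < 1 + lam := by linarith
    positivity
  rw [← hEn, ← hE0]
  linarith [hfin, hRlam]
end
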